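/- arXiv:2110.10081 — 5 statements merged into one kernel-verified Lean document; each statement's English description precedes it below -/
import Mathlib

section
/- (Proposition 1, equivalence of the marginal MDP.) (i) For every policy π = (π_t)_{t=0..T}, every timestep t ∈ {0, …, T+1} and every state s ∈ S, the context-marginalized full-information value equals the marginal-MDP value: ∫ V^π_t(s, x) dF(x) = Ṽ^π_t(s). (ii) Consequently, for any set Π of policies and any initial state s₀ ∈ S, sup_{π∈Π} ∫ V^π_0(s₀, x) dF(x) = sup_{π∈Π} Ṽ^π_0(s₀), and a policy π ∈ Π maximizes π ↦ ∫ V^π_0(s₀, x) dF(x) over Π if and only if it maximizes π ↦ Ṽ^π_0(s₀) over Π. -/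
open MeasureTheory

/-- A valid contextual MDP policy `π t s x a = π_t(a | s, x)`: measurable in
the context, nonnegative, and summing to one over actions. -/
def IsValidPolicy {S A 𝒳 : Type*} [Fintype A] [MeasurableSpace 𝒳]
    (π : ℕ → S → 𝒳 → A → ℝ) : Prop :=
  (∀ t s a, Measurable fun x => π t s x a) ∧
  (∀ t s x a, 0 ≤ π t s x a) ∧
  (∀ t s x, ∑ a, π t s x a = 1)

/-- (Proposition 1, equivalence of the marginal MDP.) Let `V π` be the
full-information value function and `Vt π` the marginal-MDP value function,
both defined by their backward recursions. Then (i) for every valid policy,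
every `t ≤ T+1` and every state `s`, `∫ V^π_t(s,x) dF(x) = Ṽ^π_t(s)`;
(ii) for any set `Π` of valid policies and any initial state `s₀`, the suprema
of the two value criteria over `Π` agree, and a policy in `Π` maximizes the
context-marginalized full-information value iff it maximizes the marginal-MDP
value. -/
theorem marginal_mdp_equivalence
    {S A Y 𝒳 : Type*} [Fintype S] [Nonempty S] [Fintype A] [Nonempty A]
    [Fintype Y] [Nonempty Y] [MeasurableSpace 𝒳]
    (F : Measure 𝒳) [IsProbabilityMeasure F]
    (trans : S → Y → S)
    (μ : A → 𝒳 → Y → ℝ)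
    (hμmeas : ∀ a y, Measurable fun x => μ a x y)
    (hμnn : ∀ a x y, 0 ≤ μ a x y)
    (hμsum : ∀ a x, ∑ y, μ a x y = 1)
    (R : S → A → S → ℝ) (T : ℕ)
    (V : (ℕ → S → 𝒳 → A → ℝ) → ℕ → S → 𝒳 → ℝ)
    (Vt : (ℕ → S → 𝒳 → A → ℝ) → ℕ → S → ℝ)
    (hVtop : ∀ π s x, V π (T + 1) s x = 0)
    (hVrec : ∀ π, IsValidPolicy π → ∀ t ≤ T, ∀ s x,
      V π t s x = ∑ a, π t s x a * ∑ y, μ a x y *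
        (R s a (trans s y) + ∫ x', V π (t + 1) (trans s y) x' ∂F))
    (hVttop : ∀ π s, Vt π (T + 1) s = 0)
    (hVtrec : ∀ π, IsValidPolicy π → ∀ t ≤ T, ∀ s,
      Vt π t s = (∫ x, ∑ a, ∑ y, π t s x a * μ a x y * R s a (trans s y) ∂F)
        + ∑ y, (∫ x, ∑ a, π t s x a * μ a x y ∂F) * Vt π (t + 1) (trans s y)) :
    (∀ π, IsValidPolicy π → ∀ t ≤ T + 1, ∀ s,
      (∫ x, V π t s x ∂F) = Vt π t s) ∧
    (∀ Pi : Set (ℕ → S → 𝒳 → A → ℝ), (∀ π ∈ Pi, IsValidPolicy π) → ∀ s0 : S,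
      sSup ((fun π => ∫ x, V π 0 s0 x ∂F) '' Pi) =
        sSup ((fun π => Vt π 0 s0) '' Pi) ∧
      ∀ π ∈ Pi,
        ((∀ π' ∈ Pi, (∫ x, V π' 0 s0 x ∂F) ≤ ∫ x, V π 0 s0 x ∂F) ↔
         (∀ π' ∈ Pi, Vt π' 0 s0 ≤ Vt π 0 s0))) := by

  have key : ∀ π, IsValidPolicy π → ∀ t ≤ T + 1, ∀ s,
      (∫ x, V π t s x ∂F) = Vt π t s := by
    intro π hπ
    obtain ⟨hπm, hπnn, hπsum⟩ := hπ
    have hπle : ∀ t s x a, π t s x a ≤ 1 := by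
      intro t s x a
      calc π t s x a ≤ ∑ b, π t s x b :=
            Finset.single_le_sum (fun b _ => hπnn t s x b) (Finset.mem_univ a)
        _ = 1 := hπsum t s x
    have hμle : ∀ a x y, μ a x y ≤ 1 := by
      intro a x y
      calc μ a x y ≤ ∑ z, μ a x z :=
            Finset.single_le_sum (fun z _ => hμnn a x z) (Finset.mem_univ y)
        _ = 1 := hμsum a x
    have hInt : ∀ t s a y, Integrable (fun x => π t s x a * μ a x y) F := by
      intro t s a y
      refine Integrable.mono' (integrable_const 1)
        ((hπm t s a).mul (hμmeas a y)).aestronglyMeasurable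
        (ae_of_all _ fun x => ?_)
      rw [Real.norm_of_nonneg (mul_nonneg (hπnn _ _ _ _) (hμnn _ _ _))]
      calc π t s x a * μ a x y ≤ 1 * 1 :=
            mul_le_mul (hπle _ _ _ _) (hμle _ _ _) (hμnn _ _ _) zero_le_one
        _ = 1 := by ring
    suffices h : ∀ d t, t + d = T + 1 → ∀ s, (∫ x, V π t s x ∂F) = Vt π t s by
      intro t ht s; exact h (T + 1 - t) t (by omega) s
    intro d
    induction d with
    | zero =>
      intro t ht s
      have ht' : t = T + 1 := by omega
      subst ht'
      simp [hVtop, hVttop]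
    | succ d ih =>
      intro t ht s
      have htT : t ≤ T := by omega
      have hV : ∀ x, V π t s x = ∑ a, ∑ y, π t s x a * μ a x y *
          (R s a (trans s y) + Vt π (t + 1) (trans s y)) := by
        intro x
        rw [hVrec π ⟨hπm, hπnn, hπsum⟩ t htT s x]
        refine Finset.sum_congr rfl fun a _ => ?_
        rw [Finset.mul_sum]
        refine Finset.sum_congr rfl fun y _ => ?_
        rw [ih (t + 1) (by omega) (trans s y)]
        ring
      rw [hVtrec π ⟨hπm, hπnn, hπsum⟩ t htT s]
      have step1 : (∫ x, V π t s x ∂F) = ∑ a, ∑ y,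
          (∫ x, π t s x a * μ a x y ∂F) *
            (R s a (trans s y) + Vt π (t + 1) (trans s y)) := by
        simp_rw [hV]
        rw [integral_finset_sum _ fun a _ =>
          integrable_finset_sum _ fun y _ => (hInt t s a y).mul_const _]
        refine Finset.sum_congr rfl fun a _ => ?_
        rw [integral_finset_sum _ fun y _ => (hInt t s a y).mul_const _]
        exact Finset.sum_congr rfl fun y _ => integral_mul_const _ _
      have step2 : (∫ x, ∑ a, ∑ y, π t s x a * μ a x y * R s a (trans s y) ∂F)
          = ∑ a, ∑ y, (∫ x, π t s x a * μ a x y ∂F) * R s a (trans s y) := by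
        rw [integral_finset_sum _ fun a _ =>
          integrable_finset_sum _ fun y _ => (hInt t s a y).mul_const _]
        refine Finset.sum_congr rfl fun a _ => ?_
        rw [integral_finset_sum _ fun y _ => (hInt t s a y).mul_const _]
        exact Finset.sum_congr rfl fun y _ => integral_mul_const _ _
      have step3 : ∀ y, (∫ x, ∑ a, π t s x a * μ a x y ∂F)
          = ∑ a, ∫ x, π t s x a * μ a x y ∂F := by
        intro y
        rw [integral_finset_sum _ fun a _ => hInt t s a y]
      rw [step1, step2]
      simp_rw [step3, mul_add, Finset.sum_add_distrib, Finset.sum_mul]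
      rw [Finset.sum_comm (γ := Y)]
  refine ⟨key, ?_⟩
  intro Pi hPi s0
  have heq : ∀ π ∈ Pi, (∫ x, V π 0 s0 x ∂F) = Vt π 0 s0 :=
    fun π hp => key π (hPi π hp) 0 (by omega) s0
  constructor
  · rw [Set.image_congr heq]
  · intro π hπmem
    constructor
    · intro h π' h'
      rw [← heq π' h', ← heq π hπmem]
      exact h π' h'
    · intro h π' h'
      rw [heq π' h', heq π hπmem]
      exact h π' h'
end

section
/- (Proposition 2, double robustness of the single-timestep estimator of marginal transitions.) Suppose either (a) μ̂ = μ everywhere, or (b) ê = e everywhere and additionally e(a, X) > 0 almost surely for every a ∈ 𝒜. Then for every y ∈ 𝒴, E[ Σ_{a∈𝒜} π(a|X) · Γ(y|a) ] = P(Y=y|π), i.e. the doubly robust score is an unbiased estimator of the marginal transition probability P(Y=y|π) as soon as at least one of the two nuisance functions is correctly specified. -/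
open MeasureTheory ProbabilityTheory

lemma dr_integrable_of_bdd {Ω : Type*} [MeasurableSpace Ω] (P : Measure Ω)
    [IsProbabilityMeasure P] (f : Ω → ℝ) (hf : Measurable f) (C : ℝ)
    (hb : ∀ ω, |f ω| ≤ C) : Integrable f P :=
  ⟨hf.aestronglyMeasurable, HasFiniteIntegral.of_bounded (C := C) (ae_of_all _ hb)⟩

lemma dr_key {Ω 𝒳 : Type*} [MeasurableSpace Ω] [mX : MeasurableSpace 𝒳]
    (P : Measure Ω) [IsProbabilityMeasure P]
    (X : Ω → 𝒳) (hX : Measurable X)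
    (f : Ω → ℝ) (hf : Measurable f) (Cf : ℝ) (hfb : ∀ ω, |f ω| ≤ Cf)
    (h : 𝒳 → ℝ)
    (hcond : P[f | mX.comap X] =ᵐ[P] fun ω => h (X ω))
    (g : 𝒳 → ℝ) (hg : Measurable g) (Cg : ℝ) (hgb : ∀ x, |g x| ≤ Cg) :
    ∫ ω, g (X ω) * f ω ∂P = ∫ ω, g (X ω) * h (X ω) ∂P := by
  have hm : mX.comap X ≤ ‹MeasurableSpace Ω› := hX.comap_le
  have hXm : Measurable[mX.comap X] X := measurable_iff_comap_le.mpr le_rfl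
  have hgX : StronglyMeasurable[mX.comap X] (fun ω => g (X ω)) :=
    (hg.comp hXm).stronglyMeasurable
  have hfint : Integrable f P := dr_integrable_of_bdd P f hf Cf hfb
  have hprod : Integrable (fun ω => g (X ω) * f ω) P :=
    dr_integrable_of_bdd P _ ((hg.comp hX).mul hf) (Cg * Cf)
      (by intro ω
          rw [abs_mul]
          exact mul_le_mul (hgb (X ω)) (hfb ω) (abs_nonneg (f ω)) ((abs_nonneg (g (X ω))).trans (hgb (X ω))))
  have h1 : P[(fun ω => g (X ω) * f ω) | mX.comap X]
      =ᵐ[P] fun ω => g (X ω) * (P[f | mX.comap X]) ω :=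
    condExp_mul_of_stronglyMeasurable_left hgX hprod hfint
  have h2 : P[(fun ω => g (X ω) * f ω) | mX.comap X]
      =ᵐ[P] fun ω => g (X ω) * h (X ω) :=
    h1.trans (hcond.mono fun ω hω => by simp [hω])
  calc ∫ ω, g (X ω) * f ω ∂P
      = ∫ ω, (P[(fun ω => g (X ω) * f ω) | mX.comap X]) ω ∂P :=
        (integral_condExp hm).symm
    _ = ∫ ω, g (X ω) * h (X ω) ∂P := integral_congr_ae h2

/-- (Proposition 2, double robustness of the single-timestep estimator of
marginal transitions.) If either the outcome model `μhat` is correct, or the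
propensity model `ehat` is correct and the true propensity is a.s. positive,
then for every `y` the expectation of the doubly robust score
`Σ_a π(a|X) Γ(y|a)` equals the marginal transition probability
`P(Y=y|π) = E[Σ_a π(a|X) μ(y,a,X)]`. -/
theorem doubly_robust_unbiased
    {Ω 𝒳 𝒜 𝒴 : Type*} [MeasurableSpace Ω] [mX : MeasurableSpace 𝒳]
    [MeasurableSpace 𝒜] [Fintype 𝒜] [Nonempty 𝒜] [DecidableEq 𝒜] [MeasurableSingletonClass 𝒜]
    [MeasurableSpace 𝒴] [Fintype 𝒴] [Nonempty 𝒴] [DecidableEq 𝒴] [MeasurableSingletonClass 𝒴]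
    (P : Measure Ω) [IsProbabilityMeasure P]
    (X : Ω → 𝒳) (A : Ω → 𝒜) (Y : Ω → 𝒴)
    (hX : Measurable X) (hA : Measurable A) (hY : Measurable Y)
    (e : 𝒜 → 𝒳 → ℝ) (μr : 𝒴 → 𝒜 → 𝒳 → ℝ)
    (he_meas : ∀ a, Measurable (e a)) (hμ_meas : ∀ y a, Measurable (μr y a))
    (he_range : ∀ a x, e a x ∈ Set.Icc (0 : ℝ) 1)
    (hμ_range : ∀ y a x, μr y a x ∈ Set.Icc (0 : ℝ) 1)
    (he_cond : ∀ a,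
      P[(fun ω => if A ω = a then (1 : ℝ) else 0) | mX.comap X]
        =ᵐ[P] fun ω => e a (X ω))
    (hμe_cond : ∀ y a,
      P[(fun ω => if Y ω = y ∧ A ω = a then (1 : ℝ) else 0) | mX.comap X]
        =ᵐ[P] fun ω => μr y a (X ω) * e a (X ω))
    (π : 𝒜 → 𝒳 → ℝ) (hπ_meas : ∀ a, Measurable (π a))
    (hπ_range : ∀ a x, π a x ∈ Set.Icc (0 : ℝ) 1)
    (hπ_sum : ∀ x, ∑ a, π a x = 1)
    (μhat : 𝒴 → 𝒜 → 𝒳 → ℝ) (ehat : 𝒜 → 𝒳 → ℝ)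
    (hμhat_meas : ∀ y a, Measurable (μhat y a))
    (hμhat_bdd : ∃ C, ∀ y a x, |μhat y a x| ≤ C)
    (hehat_meas : ∀ a, Measurable (ehat a))
    (ν : ℝ) (hν : 0 < ν) (hehat_lb : ∀ a x, ν ≤ ehat a x)
    (hcase : (∀ y a x, μhat y a x = μr y a x) ∨
      ((∀ a x, ehat a x = e a x) ∧ ∀ a, ∀ᵐ ω ∂P, 0 < e a (X ω))) :
    ∀ y : 𝒴,
      ∫ ω, (∑ a, π a (X ω) *
        (((if Y ω = y then (1 : ℝ) else 0) - μhat y (A ω) (X ω))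
            / ehat (A ω) (X ω) * (if A ω = a then (1 : ℝ) else 0)
          + μhat y a (X ω))) ∂P
      = ∫ ω, (∑ a, π a (X ω) * μr y a (X ω)) ∂P := by
  intro y
  obtain ⟨C0, hC0⟩ := hμhat_bdd
  set C := max C0 0 with hCdef
  have hC : ∀ y a x, |μhat y a x| ≤ C := fun y a x => (hC0 y a x).trans (le_max_left _ _)
  have hCpos : (0:ℝ) ≤ C := le_max_right _ _
  have hπb : ∀ a x, |π a x| ≤ 1 := fun a x =>
    abs_le.mpr ⟨by linarith [(hπ_range a x).1], (hπ_range a x).2⟩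
  have hμrb : ∀ a x, |μr y a x| ≤ 1 := fun a x =>
    abs_le.mpr ⟨by linarith [(hμ_range y a x).1], (hμ_range y a x).2⟩
  have heb : ∀ a x, |e a x| ≤ 1 := fun a x =>
    abs_le.mpr ⟨by linarith [(he_range a x).1], (he_range a x).2⟩
  have hEpos : ∀ a x, (0:ℝ) < ehat a x := fun a x => lt_of_lt_of_le hν (hehat_lb a x)
  -- bounds for the ratio functions
  have hg1b : ∀ a x, |π a x / ehat a x| ≤ 1 / ν := by
    intro a x
    rw [abs_div, abs_of_pos (hEpos a x)]
    exact div_le_div₀ zero_le_one (hπb a x) hν (hehat_lb a x)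
  have hg2b : ∀ a x, |π a x * μhat y a x / ehat a x| ≤ C / ν := by
    intro a x
    rw [abs_div, abs_of_pos (hEpos a x), abs_mul]
    refine div_le_div₀ hCpos ?_ hν (hehat_lb a x)
    calc |π a x| * |μhat y a x| ≤ 1 * C :=
          mul_le_mul (hπb a x) (hC y a x) (abs_nonneg _) zero_le_one
      _ = C := one_mul C
  -- measurability of indicators
  have hF1m : ∀ a, Measurable (fun ω => if Y ω = y ∧ A ω = a then (1:ℝ) else 0) := by
    intro a
    exact Measurable.ite ((hY (measurableSet_singleton y)).inter (hA (measurableSet_singleton a)))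
      measurable_const measurable_const
  have hF2m : ∀ a, Measurable (fun ω => if A ω = a then (1:ℝ) else 0) := by
    intro a
    exact Measurable.ite (hA (measurableSet_singleton a)) measurable_const measurable_const
  have hF1b : ∀ (a : 𝒜) (ω : Ω), |if Y ω = y ∧ A ω = a then (1:ℝ) else 0| ≤ 1 := by
    intro a ω; split <;> simp
  have hF2b : ∀ (a : 𝒜) (ω : Ω), |if A ω = a then (1:ℝ) else 0| ≤ 1 := by
    intro a ω; split <;> simp
  -- integrability of the three pieces
  have hu_int : ∀ a : 𝒜, Integrable
      (fun ω => π a (X ω) / ehat a (X ω) * (if Y ω = y ∧ A ω = a then (1:ℝ) else 0)) P := by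
    intro a
    refine dr_integrable_of_bdd P _ ((((hπ_meas a).div (hehat_meas a)).comp hX).mul (hF1m a))
      ((1/ν) * 1) ?_
    intro ω
    rw [abs_mul]
    exact mul_le_mul (hg1b a (X ω)) (hF1b a ω) (abs_nonneg _) (by positivity)
  have hv_int : ∀ a : 𝒜, Integrable
      (fun ω => π a (X ω) * μhat y a (X ω) / ehat a (X ω) * (if A ω = a then (1:ℝ) else 0)) P := by
    intro a
    refine dr_integrable_of_bdd P _
      (((((hπ_meas a).mul (hμhat_meas y a)).div (hehat_meas a)).comp hX).mul (hF2m a))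
      ((C/ν) * 1) ?_
    intro ω
    rw [abs_mul]
    exact mul_le_mul (hg2b a (X ω)) (hF2b a ω) (abs_nonneg _) (by positivity)
  have hw_int : ∀ a : 𝒜, Integrable (fun ω => π a (X ω) * μhat y a (X ω)) P := by
    intro a
    refine dr_integrable_of_bdd P _ (((hπ_meas a).mul (hμhat_meas y a)).comp hX) C ?_
    intro ω
    rw [abs_mul]
    calc |π a (X ω)| * |μhat y a (X ω)| ≤ 1 * C :=
          mul_le_mul (hπb a _) (hC y a _) (abs_nonneg _) zero_le_one
      _ = C := one_mul C
  -- pointwise rewriting of the integrand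
  have hpt : ∀ ω, (∑ a, π a (X ω) *
        (((if Y ω = y then (1 : ℝ) else 0) - μhat y (A ω) (X ω))
            / ehat (A ω) (X ω) * (if A ω = a then (1 : ℝ) else 0)
          + μhat y a (X ω)))
      = ∑ a, (π a (X ω) / ehat a (X ω) * (if Y ω = y ∧ A ω = a then (1:ℝ) else 0)
          - π a (X ω) * μhat y a (X ω) / ehat a (X ω) * (if A ω = a then (1:ℝ) else 0)
          + π a (X ω) * μhat y a (X ω)) := by
    intro ω
    refine Finset.sum_congr rfl fun a _ => ?_
    by_cases hA' : A ω = a <;> by_cases hY' : Y ω = y <;> simp [hA', hY'] <;> ring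
  have hsum_int : ∀ a : 𝒜, Integrable
      (fun ω => π a (X ω) / ehat a (X ω) * (if Y ω = y ∧ A ω = a then (1:ℝ) else 0)
          - π a (X ω) * μhat y a (X ω) / ehat a (X ω) * (if A ω = a then (1:ℝ) else 0)
          + π a (X ω) * μhat y a (X ω)) P :=
    fun a => ((hu_int a).sub (hv_int a)).add (hw_int a)
  rw [integral_congr_ae (ae_of_all _ hpt)]
  rw [integral_finset_sum _ (fun a _ => hsum_int a)]
  have hstep : ∀ a : 𝒜,
      ∫ ω, (π a (X ω) / ehat a (X ω) * (if Y ω = y ∧ A ω = a then (1:ℝ) else 0)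
          - π a (X ω) * μhat y a (X ω) / ehat a (X ω) * (if A ω = a then (1:ℝ) else 0)
          + π a (X ω) * μhat y a (X ω)) ∂P
      = ∫ ω, (π a (X ω) / ehat a (X ω) * (μr y a (X ω) * e a (X ω))
          - π a (X ω) * μhat y a (X ω) / ehat a (X ω) * e a (X ω)
          + π a (X ω) * μhat y a (X ω)) ∂P := by
    intro a
    have huv_int : Integrable
        (fun ω => π a (X ω) / ehat a (X ω) * (if Y ω = y ∧ A ω = a then (1:ℝ) else 0)
          - π a (X ω) * μhat y a (X ω) / ehat a (X ω) * (if A ω = a then (1:ℝ) else 0)) P :=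
      (hu_int a).sub (hv_int a)
    rw [integral_add huv_int (hw_int a), integral_sub (hu_int a) (hv_int a)]
    have e1 : ∫ ω, π a (X ω) / ehat a (X ω) * (if Y ω = y ∧ A ω = a then (1:ℝ) else 0) ∂P
        = ∫ ω, π a (X ω) / ehat a (X ω) * (μr y a (X ω) * e a (X ω)) ∂P :=
      dr_key P X hX _ (hF1m a) 1 (hF1b a) (fun x => μr y a x * e a x) (hμe_cond y a)
        (fun x => π a x / ehat a x) ((hπ_meas a).div (hehat_meas a)) (1/ν) (hg1b a)
    have e2 : ∫ ω, π a (X ω) * μhat y a (X ω) / ehat a (X ω) * (if A ω = a then (1:ℝ) else 0) ∂P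
        = ∫ ω, π a (X ω) * μhat y a (X ω) / ehat a (X ω) * e a (X ω) ∂P :=
      dr_key P X hX _ (hF2m a) 1 (hF2b a) (e a) (he_cond a)
        (fun x => π a x * μhat y a x / ehat a x)
        (((hπ_meas a).mul (hμhat_meas y a)).div (hehat_meas a)) (C/ν) (hg2b a)
    have hu'_int : Integrable (fun ω => π a (X ω) / ehat a (X ω) * (μr y a (X ω) * e a (X ω))) P := by
      refine dr_integrable_of_bdd P _
        ((((hπ_meas a).div (hehat_meas a)).comp hX).mul
          (((hμ_meas y a).mul (he_meas a)).comp hX)) ((1/ν) * (1*1)) ?_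
      intro ω
      rw [abs_mul, abs_mul]
      exact mul_le_mul (hg1b a (X ω))
        (mul_le_mul (hμrb a _) (heb a _) (abs_nonneg _) zero_le_one)
        (by positivity) (by positivity)
    have hv'_int : Integrable (fun ω => π a (X ω) * μhat y a (X ω) / ehat a (X ω) * e a (X ω)) P := by
      refine dr_integrable_of_bdd P _
        (((((hπ_meas a).mul (hμhat_meas y a)).div (hehat_meas a)).comp hX).mul
          ((he_meas a).comp hX)) ((C/ν) * 1) ?_
      intro ω
      rw [abs_mul]
      exact mul_le_mul (hg2b a (X ω)) (heb a _) (abs_nonneg _) (by positivity)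
    have huv'_int : Integrable
        (fun ω => π a (X ω) / ehat a (X ω) * (μr y a (X ω) * e a (X ω))
          - π a (X ω) * μhat y a (X ω) / ehat a (X ω) * e a (X ω)) P :=
      hu'_int.sub hv'_int
    rw [e1, e2, integral_add huv'_int (hw_int a), integral_sub hu'_int hv'_int]
  rw [Finset.sum_congr rfl (fun a _ => hstep a)]
  have hint' : ∀ a : 𝒜, Integrable
      (fun ω => π a (X ω) / ehat a (X ω) * (μr y a (X ω) * e a (X ω))
          - π a (X ω) * μhat y a (X ω) / ehat a (X ω) * e a (X ω)
          + π a (X ω) * μhat y a (X ω)) P := by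
    intro a
    have hu'_int : Integrable (fun ω => π a (X ω) / ehat a (X ω) * (μr y a (X ω) * e a (X ω))) P := by
      refine dr_integrable_of_bdd P _
        ((((hπ_meas a).div (hehat_meas a)).comp hX).mul
          (((hμ_meas y a).mul (he_meas a)).comp hX)) ((1/ν) * (1*1)) ?_
      intro ω
      rw [abs_mul, abs_mul]
      exact mul_le_mul (hg1b a (X ω))
        (mul_le_mul (hμrb a _) (heb a _) (abs_nonneg _) zero_le_one)
        (by positivity) (by positivity)
    have hv'_int : Integrable (fun ω => π a (X ω) * μhat y a (X ω) / ehat a (X ω) * e a (X ω)) P := by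
      refine dr_integrable_of_bdd P _
        (((((hπ_meas a).mul (hμhat_meas y a)).div (hehat_meas a)).comp hX).mul
          ((he_meas a).comp hX)) ((C/ν) * 1) ?_
      intro ω
      rw [abs_mul]
      exact mul_le_mul (hg2b a (X ω)) (heb a _) (abs_nonneg _) (by positivity)
    exact (hu'_int.sub hv'_int).add (hw_int a)
  rw [← integral_finset_sum _ (fun a _ => hint' a)]
  -- final case analysis
  rcases hcase with hμc | ⟨hEc, hpos⟩
  · refine integral_congr_ae (ae_of_all _ fun ω => ?_)
    refine Finset.sum_congr rfl fun a _ => ?_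
    rw [hμc y a]
    ring
  · have hall : ∀ᵐ ω ∂P, ∀ a, 0 < e a (X ω) := ae_all_iff.mpr hpos
    refine integral_congr_ae (hall.mono fun ω hω => ?_)
    refine Finset.sum_congr rfl fun a _ => ?_
    have h0 : e a (X ω) ≠ 0 := (hω a).ne'
    rw [hEc a]
    field_simp
    ring
end

section
/- (Sequential doubly robust fitted value evaluation, outcome-model case.) If μ̂ = μ everywhere, then the backward-recursive doubly robust value estimator is unbiased: E[ V̂_t(s) ] = V^π_t(s) for every t ∈ {0, …, T+1} and every s ∈ S. -/
open MeasureTheory ProbabilityTheory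

lemma aux_integrable_of_bdd {Ω : Type*} [MeasurableSpace Ω] {P : Measure Ω}
    [IsFiniteMeasure P] {f : Ω → ℝ} {C : ℝ} (hf : Measurable f)
    (hb : ∀ ω, |f ω| ≤ C) : Integrable f P :=
  ⟨hf.aestronglyMeasurable,
    HasFiniteIntegral.of_bounded (C := C)
      (Filter.Eventually.of_forall (by simpa [Real.norm_eq_abs] using hb))⟩

lemma aux_meas_mixed {𝒳 𝒜 𝒴 : Type*} [MeasurableSpace 𝒳] [MeasurableSpace 𝒜]
    [Countable 𝒜] [MeasurableSingletonClass 𝒜] [MeasurableSpace 𝒴] [Countable 𝒴]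
    [MeasurableSingletonClass 𝒴] {f : 𝒳 × 𝒜 × 𝒴 → ℝ}
    (hf : ∀ a y, Measurable fun x => f (x, a, y)) : Measurable f :=
  measurable_from_prod_countable_left (fun q : 𝒜 × 𝒴 => hf q.1 q.2)

lemma aux_indepFun_mono {Ω β γ β' γ' : Type*} [MeasurableSpace Ω]
    [mβ : MeasurableSpace β] [mγ : MeasurableSpace γ]
    [mβ' : MeasurableSpace β'] [mγ' : MeasurableSpace γ'] {μ : Measure Ω}
    {f : Ω → β} {g : Ω → γ} {f' : Ω → β'} {g' : Ω → γ'}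
    (h : IndepFun f g μ)
    (h1 : MeasurableSpace.comap f' mβ' ≤ MeasurableSpace.comap f mβ)
    (h2 : MeasurableSpace.comap g' mγ' ≤ MeasurableSpace.comap g mγ) :
    IndepFun f' g' μ :=
  indep_of_indep_of_le_right (indep_of_indep_of_le_left h h1) h2

lemma aux_tower {Ω 𝒳 : Type*} [MeasurableSpace Ω] [mX : MeasurableSpace 𝒳]
    (P : Measure Ω) [IsProbabilityMeasure P] (X : Ω → 𝒳) (hX : Measurable X)
    (h : 𝒳 → ℝ) (hh : Measurable h) (Ch : ℝ) (hhb : ∀ x, |h x| ≤ Ch)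
    (I : Ω → ℝ) (hI : Measurable I) (CI : ℝ) (hIb : ∀ ω, |I ω| ≤ CI)
    (k : 𝒳 → ℝ)
    (hcond : P[I | mX.comap X] =ᵐ[P] fun ω => k (X ω)) :
    ∫ ω, h (X ω) * I ω ∂P = ∫ ω, h (X ω) * k (X ω) ∂P := by
  have hm : mX.comap X ≤ _ := hX.comap_le
  haveI : SigmaFinite (P.trim hm) := inferInstance
  have hIint : Integrable I P := aux_integrable_of_bdd hI hIb
  have hprod : Integrable ((fun ω => h (X ω)) * I) P := by
    refine aux_integrable_of_bdd ((hh.comp hX).mul hI) (C := Ch * CI) fun ω => ?_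
    rw [Pi.mul_apply, abs_mul]
    exact mul_le_mul (hhb _) (hIb _) (abs_nonneg _)
      (le_trans (abs_nonneg _) (hhb (X ω)))
  have hsm : StronglyMeasurable[mX.comap X] fun ω => h (X ω) :=
    (hh.comp (measurable_iff_comap_le.mpr le_rfl)).stronglyMeasurable
  have h1 : P[(fun ω => h (X ω)) * I | mX.comap X]
      =ᵐ[P] (fun ω => h (X ω)) * P[I | mX.comap X] :=
    condExp_mul_of_stronglyMeasurable_left hsm hprod hIint
  calc ∫ ω, h (X ω) * I ω ∂P
      = ∫ ω, (P[(fun ω => h (X ω)) * I | mX.comap X]) ω ∂P :=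
        (integral_condExp hm).symm
    _ = ∫ ω, ((fun ω => h (X ω)) * P[I | mX.comap X]) ω ∂P :=
        integral_congr_ae h1
    _ = ∫ ω, h (X ω) * k (X ω) ∂P := by
        refine integral_congr_ae (hcond.mono fun ω hω => ?_)
        simp only [Pi.mul_apply, hω]

/-- (Sequential doubly robust fitted value evaluation, outcome-model case.)
With i.i.d. batches of triples `(X_{t,i}, A_{t,i}, Y_{t,i})`, `X ~ F`, true
nuisances `(e, μr)` characterized via conditional expectations, the true policy
value `V` and the backward-recursive doubly robust fitted value estimator
`Vhat` built from nuisance estimates `(μhat, ehat)`: if `μhat = μr` everywhere,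
then `E[Vhat t s] = V t s` for every `t ≤ T+1` and every state `s`. -/
theorem sequential_dr_unbiased_outcome_case
    {Ω 𝒳 : Type*} [MeasurableSpace Ω] [mX : MeasurableSpace 𝒳]
    {S 𝒜 𝒴 : Type*} [Fintype S] [Nonempty S]
    [MeasurableSpace 𝒜] [Fintype 𝒜] [Nonempty 𝒜] [DecidableEq 𝒜]
    [MeasurableSingletonClass 𝒜]
    [MeasurableSpace 𝒴] [Fintype 𝒴] [Nonempty 𝒴] [DecidableEq 𝒴]
    [MeasurableSingletonClass 𝒴]
    (P : Measure Ω) [IsProbabilityMeasure P]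
    (F : Measure 𝒳) [IsProbabilityMeasure F]
    (trans : S → 𝒴 → S) (R : S → 𝒜 → S → ℝ) (T : ℕ) (n : ℕ) (hn : 0 < n)
    (e : 𝒜 → 𝒳 → ℝ) (μr : 𝒴 → 𝒜 → 𝒳 → ℝ)
    (he_meas : ∀ a, Measurable (e a)) (hμ_meas : ∀ y a, Measurable (μr y a))
    (he_range : ∀ a x, e a x ∈ Set.Icc (0 : ℝ) 1)
    (hμ_range : ∀ y a x, μr y a x ∈ Set.Icc (0 : ℝ) 1)
    (hμ_sum : ∀ a x, ∑ y, μr y a x = 1)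
    (π : ℕ → S → 𝒳 → 𝒜 → ℝ)
    (hπ_meas : ∀ t s a, Measurable fun x => π t s x a)
    (hπ_range : ∀ t s x a, π t s x a ∈ Set.Icc (0 : ℝ) 1)
    (hπ_sum : ∀ t s x, ∑ a, π t s x a = 1)
    (Xd : ℕ → Fin n → Ω → 𝒳) (Ad : ℕ → Fin n → Ω → 𝒜) (Yd : ℕ → Fin n → Ω → 𝒴)
    (hXd_meas : ∀ t i, Measurable (Xd t i))
    (hAd_meas : ∀ t i, Measurable (Ad t i))
    (hYd_meas : ∀ t i, Measurable (Yd t i))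
    (hX_law : ∀ t ≤ T, ∀ i, Measure.map (Xd t i) P = F)
    (hident : ∀ t ≤ T, ∀ i j,
      Measure.map (fun ω => (Xd t i ω, Ad t i ω, Yd t i ω)) P =
        Measure.map (fun ω => (Xd t j ω, Ad t j ω, Yd t j ω)) P)
    (hindep : iIndepFun
      (fun p : Fin (T + 1) × Fin n => fun ω =>
        (Xd p.1 p.2 ω, Ad p.1 p.2 ω, Yd p.1 p.2 ω)) P)
    (he_cond : ∀ t ≤ T, ∀ i a,
      P[(fun ω => if Ad t i ω = a then (1 : ℝ) else 0) | mX.comap (Xd t i)]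
        =ᵐ[P] fun ω => e a (Xd t i ω))
    (hμe_cond : ∀ t ≤ T, ∀ i y a,
      P[(fun ω => if Yd t i ω = y ∧ Ad t i ω = a then (1 : ℝ) else 0) |
          mX.comap (Xd t i)]
        =ᵐ[P] fun ω => μr y a (Xd t i ω) * e a (Xd t i ω))
    (μhat : 𝒴 → 𝒜 → 𝒳 → ℝ) (ehat : 𝒜 → 𝒳 → ℝ)
    (hμhat_meas : ∀ y a, Measurable (μhat y a))
    (hμhat_bdd : ∃ C, ∀ y a x, |μhat y a x| ≤ C)
    (hehat_meas : ∀ a, Measurable (ehat a))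
    (ν : ℝ) (hν : 0 < ν) (hehat_lb : ∀ a x, ν ≤ ehat a x)
    (V : ℕ → S → ℝ)
    (hVtop : ∀ s, V (T + 1) s = 0)
    (hVrec : ∀ t ≤ T, ∀ s, V t s =
      ∫ x, ∑ a, ∑ y, π t s x a * μr y a x *
        (R s a (trans s y) + V (t + 1) (trans s y)) ∂F)
    (Vhat : ℕ → S → Ω → ℝ)
    (hVhattop : ∀ s ω, Vhat (T + 1) s ω = 0)
    (hVhatrec : ∀ t ≤ T, ∀ s ω, Vhat t s ω =
      (n : ℝ)⁻¹ * ∑ i : Fin n, ∑ a, ∑ y,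
        π t s (Xd t i ω) a *
          (((if Yd t i ω = y then (1 : ℝ) else 0) - μhat y (Ad t i ω) (Xd t i ω))
              / ehat (Ad t i ω) (Xd t i ω)
              * (if Ad t i ω = a then (1 : ℝ) else 0)
            + μhat y a (Xd t i ω)) *
          (R s a (trans s y) + Vhat (t + 1) (trans s y) ω))
    (hcase : ∀ y a x, μhat y a x = μr y a x) :
    ∀ t ≤ T + 1, ∀ s : S, (∫ ω, Vhat t s ω ∂P) = V t s := by
  classical
  -- nonemptiness of 𝒳
  have hXne : Nonempty 𝒳 := by
    by_contra hne
    rw [not_nonempty_iff] at hne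
    have h1 : F Set.univ = 1 := measure_univ
    rw [Set.univ_eq_empty_iff.mpr hne, measure_empty] at h1
    exact zero_ne_one h1
  -- bounds
  obtain ⟨Cμ, hCμ⟩ := hμhat_bdd
  have hCμ0 : 0 ≤ Cμ := le_trans (abs_nonneg _)
    (hCμ (Classical.arbitrary 𝒴) (Classical.arbitrary 𝒜) (Classical.arbitrary 𝒳))
  set B : ℝ := (1 + Cμ) / ν + Cμ with hBdef
  have hB0 : 0 ≤ B := add_nonneg (div_nonneg (by linarith) hν.le) hCμ0
  obtain ⟨CR0, hCR0⟩ := Finite.exists_le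
    (fun q : S × 𝒜 × 𝒴 => |R q.1 q.2.1 (trans q.1 q.2.2)|)
  set CR : ℝ := max CR0 0 with hCRdef
  have hCRnn : 0 ≤ CR := le_max_right _ _
  have hCR : ∀ s a y, |R s a (trans s y)| ≤ CR :=
    fun s a y => le_trans (hCR0 (s, a, y)) (le_max_left _ _)
  have hπ1 : ∀ t s x a, |π t s x a| ≤ 1 := by
    intro t s x a
    rcases hπ_range t s x a with ⟨h0, h1⟩
    rw [abs_of_nonneg h0]; exact h1
  have hn0 : (n : ℝ) ≠ 0 := Nat.cast_ne_zero.mpr hn.ne'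
  -- the joint data map
  set Z : Fin (T + 1) × Fin n → Ω → 𝒳 × 𝒜 × 𝒴 :=
    fun p ω => (Xd p.1 p.2 ω, Ad p.1 p.2 ω, Yd p.1 p.2 ω) with hZdef
  have hZ_meas : ∀ p, Measurable (Z p) :=
    fun p => ((hXd_meas _ _).prodMk ((hAd_meas _ _).prodMk (hYd_meas _ _)))
  -- σ-algebras of "data from time t on"
  set M : ℕ → MeasurableSpace Ω := fun t =>
    ⨆ (p : Fin (T + 1) × Fin n) (_ : t ≤ (p.1 : ℕ)),
      MeasurableSpace.comap (Z p) inferInstance with hMdef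
  have hcomap_le_M : ∀ (t : ℕ) (p : Fin (T + 1) × Fin n), t ≤ (p.1 : ℕ) →
      MeasurableSpace.comap (Z p) inferInstance ≤ M t := by
    intro t p hp
    exact le_iSup₂ (f := fun (p : Fin (T + 1) × Fin n) (_ : t ≤ (p.1 : ℕ)) =>
      MeasurableSpace.comap (Z p) inferInstance) p hp
  have hM_mono : ∀ t u : ℕ, t ≤ u → M u ≤ M t := by
    intro t u htu
    exact iSup₂_le fun p hp => hcomap_le_M t p (htu.trans hp)
  have hM_le : ∀ t, M t ≤ ‹MeasurableSpace Ω› := by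
    intro t
    exact iSup₂_le fun p _ => (hZ_meas p).comap_le
  -- measurability of the per-sample factor
  have hφmeas : ∀ (t : ℕ) (s : S) (a : 𝒜) (y : 𝒴),
      Measurable (fun z : 𝒳 × 𝒜 × 𝒴 => π t s z.1 a *
        (((if z.2.2 = y then (1 : ℝ) else 0) - μhat y z.2.1 z.1)
            / ehat z.2.1 z.1 * (if z.2.1 = a then (1 : ℝ) else 0)
          + μhat y a z.1)) := by
    intro t s a y
    refine aux_meas_mixed fun a0 y0 => ?_
    dsimp only
    exact (hπ_meas t s a).mul
      (((((measurable_const (a := if y0 = y then (1 : ℝ) else 0)).sub (hμhat_meas y a0)).div (hehat_meas a0)).mul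
        (measurable_const (a := if a0 = a then (1 : ℝ) else 0))).add (hμhat_meas y a))
  have hφbdd : ∀ (t : ℕ) (s : S) (a : 𝒜) (y : 𝒴) (z : 𝒳 × 𝒜 × 𝒴),
      |π t s z.1 a *
        (((if z.2.2 = y then (1 : ℝ) else 0) - μhat y z.2.1 z.1)
            / ehat z.2.1 z.1 * (if z.2.1 = a then (1 : ℝ) else 0)
          + μhat y a z.1)| ≤ B := by
    intro t s a y z
    have he_pos : 0 < ehat z.2.1 z.1 := lt_of_lt_of_le hν (hehat_lb _ _)
    have h1 : |(if z.2.2 = y then (1 : ℝ) else 0) - μhat y z.2.1 z.1| ≤ 1 + Cμ := by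
      calc |(if z.2.2 = y then (1 : ℝ) else 0) - μhat y z.2.1 z.1|
          ≤ |(if z.2.2 = y then (1 : ℝ) else 0)| + |μhat y z.2.1 z.1| := abs_sub _ _
        _ ≤ 1 + Cμ := add_le_add (by split <;> simp) (hCμ _ _ _)
    have h2 : |((if z.2.2 = y then (1 : ℝ) else 0) - μhat y z.2.1 z.1)
        / ehat z.2.1 z.1| ≤ (1 + Cμ) / ν := by
      rw [abs_div, abs_of_pos he_pos]
      exact div_le_div₀ (by linarith) h1 hν (hehat_lb _ _)
    have h3 : |((if z.2.2 = y then (1 : ℝ) else 0) - μhat y z.2.1 z.1)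
        / ehat z.2.1 z.1 * (if z.2.1 = a then (1 : ℝ) else 0)| ≤ (1 + Cμ) / ν := by
      rw [abs_mul]
      calc |_| * |(if z.2.1 = a then (1 : ℝ) else 0)| ≤ ((1 + Cμ) / ν) * 1 :=
            mul_le_mul h2 (by split <;> simp) (abs_nonneg _)
              (div_nonneg (by linarith) hν.le)
        _ = (1 + Cμ) / ν := mul_one _
    have h4 : |((if z.2.2 = y then (1 : ℝ) else 0) - μhat y z.2.1 z.1)
        / ehat z.2.1 z.1 * (if z.2.1 = a then (1 : ℝ) else 0)
        + μhat y a z.1| ≤ B := by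
      calc |_ + μhat y a z.1| ≤ _ + |μhat y a z.1| := abs_add_le _ _
        _ ≤ (1 + Cμ) / ν + Cμ := add_le_add h3 (hCμ _ _ _)
    rw [abs_mul]
    calc |π t s z.1 a| * |_| ≤ 1 * B :=
          mul_le_mul (hπ1 _ _ _ _) h4 (abs_nonneg _) zero_le_one
      _ = B := one_mul _
  -- main downward induction
  have key : ∀ d t, t + d = T + 1 →
      (∀ s, Measurable[M t] (Vhat t s)) ∧
      (∃ C, 0 ≤ C ∧ ∀ s ω, |Vhat t s ω| ≤ C) ∧
      (∀ s, ∫ ω, Vhat t s ω ∂P = V t s) := by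
    intro d
    induction d with
    | zero =>
      intro t ht
      have htT : t = T + 1 := by omega
      subst htT
      refine ⟨fun s => ?_, ⟨0, le_refl _, fun s ω => by simp [hVhattop]⟩,
        fun s => by simp [hVhattop, hVtop]⟩
      have : Vhat (T + 1) s = fun _ => (0 : ℝ) := funext (hVhattop s)
      rw [this]
      exact measurable_const
    | succ d ih =>
      intro t ht
      have htT : t ≤ T := by omega
      obtain ⟨ihm, ⟨C, hC0, hCb⟩, ihint⟩ := ih (t + 1) (by omega)
      set pt : Fin (T + 1) := ⟨t, by omega⟩ with hptdef
      have hμ1 : ∀ y a x, |μr y a x| ≤ 1 := by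
        intro y a x
        rcases hμ_range y a x with ⟨h0, h1⟩
        rw [abs_of_nonneg h0]; exact h1
      have hZt : ∀ i : Fin n, Measurable[M t] (Z (pt, i)) :=
        fun i => measurable_iff_comap_le.mpr (hcomap_le_M t (pt, i) le_rfl)
      -- measurability
      have hmeas_t : ∀ s, Measurable[M t] (Vhat t s) := by
        intro s
        have hfun : Vhat t s = fun ω => (n : ℝ)⁻¹ * ∑ i : Fin n, ∑ a, ∑ y,
            π t s (Xd t i ω) a *
              (((if Yd t i ω = y then (1 : ℝ) else 0) - μhat y (Ad t i ω) (Xd t i ω))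
                  / ehat (Ad t i ω) (Xd t i ω)
                  * (if Ad t i ω = a then (1 : ℝ) else 0)
                + μhat y a (Xd t i ω)) *
              (R s a (trans s y) + Vhat (t + 1) (trans s y) ω) :=
          funext (hVhatrec t htT s)
        rw [hfun]
        refine Measurable.const_mul ?_ _
        refine Finset.measurable_sum _ fun i _ => ?_
        refine Finset.measurable_sum _ fun a _ => ?_
        refine Finset.measurable_sum _ fun y _ => ?_
        refine Measurable.mul ?_ ?_
        · exact (hφmeas t s a y).comp (hZt i)
        · exact measurable_const.add
            ((ihm (trans s y)).mono (hM_mono t (t + 1) (by omega)) le_rfl)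
      -- boundedness
      set K : ℝ := (Fintype.card 𝒜 : ℝ) * ((Fintype.card 𝒴 : ℝ) * (B * (CR + C)))
        with hKdef
      have hK0 : 0 ≤ K := by positivity
      have hbd_t : ∀ s ω, |Vhat t s ω| ≤ K := by
        intro s ω
        rw [hVhatrec t htT s ω, abs_mul, abs_inv, Nat.abs_cast]
        have hterm : ∀ i : Fin n,
            |∑ a, ∑ y, π t s (Xd t i ω) a *
              (((if Yd t i ω = y then (1 : ℝ) else 0) - μhat y (Ad t i ω) (Xd t i ω))
                  / ehat (Ad t i ω) (Xd t i ω)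
                  * (if Ad t i ω = a then (1 : ℝ) else 0)
                + μhat y a (Xd t i ω)) *
              (R s a (trans s y) + Vhat (t + 1) (trans s y) ω)| ≤ K := by
          intro i
          calc |∑ a, ∑ y, _| ≤ ∑ a, |∑ y, _| := Finset.abs_sum_le_sum_abs _ _
            _ ≤ ∑ _a : 𝒜, ((Fintype.card 𝒴 : ℝ) * (B * (CR + C))) := by
                refine Finset.sum_le_sum fun a _ => ?_
                calc |∑ y, _| ≤ ∑ y, |_| := Finset.abs_sum_le_sum_abs _ _
                  _ ≤ ∑ _y : 𝒴, (B * (CR + C)) := by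
                      refine Finset.sum_le_sum fun y _ => ?_
                      rw [abs_mul]
                      refine mul_le_mul (hφbdd t s a y (Z (pt, i) ω)) ?_
                        (abs_nonneg _) hB0
                      calc |R s a (trans s y) + Vhat (t + 1) (trans s y) ω|
                          ≤ |R s a (trans s y)| + |Vhat (t + 1) (trans s y) ω| :=
                            abs_add_le _ _
                        _ ≤ CR + C := add_le_add (hCR s a y) (hCb _ _)
                  _ = (Fintype.card 𝒴 : ℝ) * (B * (CR + C)) := by
                      rw [Finset.sum_const, Finset.card_univ, nsmul_eq_mul]
            _ = K := by rw [Finset.sum_const, Finset.card_univ, nsmul_eq_mul, hKdef]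
        have h5 : |∑ i : Fin n, ∑ a, ∑ y, π t s (Xd t i ω) a *
              (((if Yd t i ω = y then (1 : ℝ) else 0) - μhat y (Ad t i ω) (Xd t i ω))
                  / ehat (Ad t i ω) (Xd t i ω)
                  * (if Ad t i ω = a then (1 : ℝ) else 0)
                + μhat y a (Xd t i ω)) *
              (R s a (trans s y) + Vhat (t + 1) (trans s y) ω)| ≤ (n : ℝ) * K := by
          calc |∑ i : Fin n, _| ≤ ∑ i : Fin n, |_| := Finset.abs_sum_le_sum_abs _ _
            _ ≤ Finset.univ.card • K :=
                Finset.sum_le_card_nsmul _ _ K (fun i _ => hterm i)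
            _ = (n : ℝ) * K := by
                rw [Finset.card_univ, Fintype.card_fin, nsmul_eq_mul]
        calc ((n : ℝ))⁻¹ * |_| ≤ ((n : ℝ))⁻¹ * ((n : ℝ) * K) :=
              mul_le_mul_of_nonneg_left h5 (inv_nonneg.mpr (Nat.cast_nonneg n))
          _ = K := by rw [← mul_assoc, inv_mul_cancel₀ hn0, one_mul]
      -- integrals
      have hVmeas' : ∀ s', Measurable (Vhat (t + 1) s') :=
        fun s' => (ihm s').mono (hM_le (t + 1)) le_rfl
      have hVint : ∀ s', Integrable (Vhat (t + 1) s') P :=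
        fun s' => aux_integrable_of_bdd (hVmeas' s') (fun ω => hCb s' ω)
      have hint_t : ∀ s, ∫ ω, Vhat t s ω ∂P = V t s := by
        intro s
        -- per-term integrability
        have htermint : ∀ (i : Fin n) (a : 𝒜) (y : 𝒴),
            Integrable (fun ω => π t s (Xd t i ω) a *
              (((if Yd t i ω = y then (1 : ℝ) else 0) - μhat y (Ad t i ω) (Xd t i ω))
                  / ehat (Ad t i ω) (Xd t i ω)
                  * (if Ad t i ω = a then (1 : ℝ) else 0)
                + μhat y a (Xd t i ω)) *
              (R s a (trans s y) + Vhat (t + 1) (trans s y) ω)) P := by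
          intro i a y
          refine aux_integrable_of_bdd (C := B * (CR + C))
            (((hφmeas t s a y).comp (hZ_meas (pt, i))).mul
              (measurable_const.add (hVmeas' (trans s y)))) fun ω => ?_
          rw [abs_mul]
          refine mul_le_mul (hφbdd t s a y (Z (pt, i) ω)) ?_ (abs_nonneg _) hB0
          calc |R s a (trans s y) + Vhat (t + 1) (trans s y) ω|
              ≤ |R s a (trans s y)| + |Vhat (t + 1) (trans s y) ω| := abs_add_le _ _
            _ ≤ CR + C := add_le_add (hCR s a y) (hCb _ _)
        -- per-term value
        have hterm : ∀ (i : Fin n) (a : 𝒜) (y : 𝒴),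
            ∫ ω, π t s (Xd t i ω) a *
              (((if Yd t i ω = y then (1 : ℝ) else 0) - μhat y (Ad t i ω) (Xd t i ω))
                  / ehat (Ad t i ω) (Xd t i ω)
                  * (if Ad t i ω = a then (1 : ℝ) else 0)
                + μhat y a (Xd t i ω)) *
              (R s a (trans s y) + Vhat (t + 1) (trans s y) ω) ∂P
            = (∫ x, π t s x a * μr y a x ∂F) *
              (R s a (trans s y) + V (t + 1) (trans s y)) := by
          intro i a y
          -- independence of the two factors
          have hdisj : Disjoint ({(pt, i)} : Finset (Fin (T + 1) × Fin n))
              (Finset.univ.filter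
                (fun p : Fin (T + 1) × Fin n => t + 1 ≤ (p.1 : ℕ))) := by
            rw [Finset.disjoint_singleton_left, Finset.mem_filter]
            push_neg
            intro _
            have hpt2 : (((pt, i).1 : Fin (T + 1)) : ℕ) = t := rfl
            omega
          have hbig := hindep.indepFun_finset ({(pt, i)} : Finset (Fin (T + 1) × Fin n))
            (Finset.univ.filter (fun p : Fin (T + 1) × Fin n => t + 1 ≤ (p.1 : ℕ)))
            hdisj hZ_meas
          have hmem1 : (pt, i) ∈ ({(pt, i)} : Finset (Fin (T + 1) × Fin n)) :=
            Finset.mem_singleton_self _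
          have hf_m : Measurable[MeasurableSpace.comap
              (fun ω (q : {x // x ∈ ({(pt, i)} : Finset (Fin (T + 1) × Fin n))}) =>
                Z (↑q) ω) inferInstance]
              (fun ω => π t s (Xd t i ω) a *
                (((if Yd t i ω = y then (1 : ℝ) else 0) - μhat y (Ad t i ω) (Xd t i ω))
                    / ehat (Ad t i ω) (Xd t i ω)
                    * (if Ad t i ω = a then (1 : ℝ) else 0)
                  + μhat y a (Xd t i ω))) := by
            have hid : Measurable[MeasurableSpace.comap
                (fun ω (q : {x // x ∈ ({(pt, i)} : Finset (Fin (T + 1) × Fin n))}) =>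
                  Z (↑q) ω) inferInstance]
                (fun ω (q : {x // x ∈ ({(pt, i)} : Finset (Fin (T + 1) × Fin n))}) =>
                  Z (↑q) ω) := measurable_iff_comap_le.mpr le_rfl
            have h0 : Measurable[MeasurableSpace.comap
                (fun ω (q : {x // x ∈ ({(pt, i)} : Finset (Fin (T + 1) × Fin n))}) =>
                  Z (↑q) ω) inferInstance]
                (fun ω => Z (pt, i) ω) :=
              (measurable_pi_apply
                (⟨(pt, i), hmem1⟩ :
                  {x // x ∈ ({(pt, i)} : Finset (Fin (T + 1) × Fin n))})).comp hid
            exact (hφmeas t s a y).comp h0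
          have hM_le2 : M (t + 1) ≤ MeasurableSpace.comap
              (fun ω (q : {x // x ∈ Finset.univ.filter
                (fun p : Fin (T + 1) × Fin n => t + 1 ≤ (p.1 : ℕ))}) => Z (↑q) ω)
              inferInstance := by
            refine iSup₂_le fun p hp => ?_
            have hmem : p ∈ Finset.univ.filter
                (fun p : Fin (T + 1) × Fin n => t + 1 ≤ (p.1 : ℕ)) :=
              Finset.mem_filter.mpr ⟨Finset.mem_univ _, hp⟩
            have hid : Measurable[MeasurableSpace.comap
                (fun ω (q : {x // x ∈ Finset.univ.filter
                  (fun p : Fin (T + 1) × Fin n => t + 1 ≤ (p.1 : ℕ))}) => Z (↑q) ω)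
                inferInstance]
                (fun ω (q : {x // x ∈ Finset.univ.filter
                  (fun p : Fin (T + 1) × Fin n => t + 1 ≤ (p.1 : ℕ))}) => Z (↑q) ω) :=
              measurable_iff_comap_le.mpr le_rfl
            have h0 : Measurable[MeasurableSpace.comap
                (fun ω (q : {x // x ∈ Finset.univ.filter
                  (fun p : Fin (T + 1) × Fin n => t + 1 ≤ (p.1 : ℕ))}) => Z (↑q) ω)
                inferInstance] (fun ω => Z p ω) :=
              (measurable_pi_apply
                (⟨p, hmem⟩ : {x // x ∈ Finset.univ.filter
                  (fun p : Fin (T + 1) × Fin n => t + 1 ≤ (p.1 : ℕ))})).comp hid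
            exact measurable_iff_comap_le.mp h0
          have hg_m : Measurable[M (t + 1)]
              (fun ω => R s a (trans s y) + Vhat (t + 1) (trans s y) ω) :=
            measurable_const.add (ihm (trans s y))
          have hIndep : IndepFun
              (fun ω => π t s (Xd t i ω) a *
                (((if Yd t i ω = y then (1 : ℝ) else 0) - μhat y (Ad t i ω) (Xd t i ω))
                    / ehat (Ad t i ω) (Xd t i ω)
                    * (if Ad t i ω = a then (1 : ℝ) else 0)
                  + μhat y a (Xd t i ω)))
              (fun ω => R s a (trans s y) + Vhat (t + 1) (trans s y) ω) P :=
            aux_indepFun_mono hbig (measurable_iff_comap_le.mp hf_m)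
              ((measurable_iff_comap_le.mp hg_m).trans hM_le2)
          have hfmeas : Measurable (fun ω => π t s (Xd t i ω) a *
              (((if Yd t i ω = y then (1 : ℝ) else 0) - μhat y (Ad t i ω) (Xd t i ω))
                  / ehat (Ad t i ω) (Xd t i ω)
                  * (if Ad t i ω = a then (1 : ℝ) else 0)
                + μhat y a (Xd t i ω))) := (hφmeas t s a y).comp (hZ_meas (pt, i))
          have hfint : Integrable (fun ω => π t s (Xd t i ω) a *
              (((if Yd t i ω = y then (1 : ℝ) else 0) - μhat y (Ad t i ω) (Xd t i ω))
                  / ehat (Ad t i ω) (Xd t i ω)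
                  * (if Ad t i ω = a then (1 : ℝ) else 0)
                + μhat y a (Xd t i ω))) P :=
            aux_integrable_of_bdd hfmeas (fun ω => hφbdd t s a y (Z (pt, i) ω))
          have hgint : Integrable
              (fun ω => R s a (trans s y) + Vhat (t + 1) (trans s y) ω) P :=
            (integrable_const _).add (hVint (trans s y))
          -- value of ∫ f
          have hIf : ∫ ω, π t s (Xd t i ω) a *
              (((if Yd t i ω = y then (1 : ℝ) else 0) - μhat y (Ad t i ω) (Xd t i ω))
                  / ehat (Ad t i ω) (Xd t i ω)
                  * (if Ad t i ω = a then (1 : ℝ) else 0)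
                + μhat y a (Xd t i ω)) ∂P = ∫ x, π t s x a * μr y a x ∂F := by
            simp only [hcase]
            have hsplit : ∀ ω, π t s (Xd t i ω) a *
                (((if Yd t i ω = y then (1 : ℝ) else 0) - μr y (Ad t i ω) (Xd t i ω))
                    / ehat (Ad t i ω) (Xd t i ω)
                    * (if Ad t i ω = a then (1 : ℝ) else 0)
                  + μr y a (Xd t i ω))
                = π t s (Xd t i ω) a / ehat a (Xd t i ω) *
                    (if Yd t i ω = y ∧ Ad t i ω = a then (1 : ℝ) else 0)
                  - π t s (Xd t i ω) a / ehat a (Xd t i ω) * μr y a (Xd t i ω) *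
                    (if Ad t i ω = a then (1 : ℝ) else 0)
                  + π t s (Xd t i ω) a * μr y a (Xd t i ω) := by
              intro ω
              by_cases hA : Ad t i ω = a
              · by_cases hY : Yd t i ω = y <;>
                  simp only [hA, hY, if_true, if_false, and_self, true_and,
                    and_true, if_neg, eq_self_iff_true] <;>
                  simp [hY] <;> ring
              · have : ¬ (Yd t i ω = y ∧ Ad t i ω = a) := fun h => hA h.2
                simp [hA, this]
            rw [show (fun ω => π t s (Xd t i ω) a *
                (((if Yd t i ω = y then (1 : ℝ) else 0) - μr y (Ad t i ω) (Xd t i ω))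
                    / ehat (Ad t i ω) (Xd t i ω)
                    * (if Ad t i ω = a then (1 : ℝ) else 0)
                  + μr y a (Xd t i ω)))
              = fun ω => π t s (Xd t i ω) a / ehat a (Xd t i ω) *
                    (if Yd t i ω = y ∧ Ad t i ω = a then (1 : ℝ) else 0)
                  - π t s (Xd t i ω) a / ehat a (Xd t i ω) * μr y a (Xd t i ω) *
                    (if Ad t i ω = a then (1 : ℝ) else 0)
                  + π t s (Xd t i ω) a * μr y a (Xd t i ω) from funext hsplit]
            have hmeas1 : Measurable (fun x => π t s x a / ehat a x) :=
              (hπ_meas t s a).div (hehat_meas a)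
            have hbd1 : ∀ x, |π t s x a / ehat a x| ≤ 1 / ν := by
              intro x
              rw [abs_div, abs_of_pos (lt_of_lt_of_le hν (hehat_lb a x))]
              exact div_le_div₀ zero_le_one (hπ1 t s x a) hν (hehat_lb a x)
            have hmeas2 : Measurable (fun x => π t s x a / ehat a x * μr y a x) :=
              hmeas1.mul (hμ_meas y a)
            have hbd2 : ∀ x, |π t s x a / ehat a x * μr y a x| ≤ 1 / ν * 1 := by
              intro x
              rw [abs_mul]
              exact mul_le_mul (hbd1 x) (hμ1 y a x) (abs_nonneg _)
                (div_nonneg zero_le_one hν.le)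
            have hmeasI1 : Measurable
                (fun ω => if Yd t i ω = y ∧ Ad t i ω = a then (1 : ℝ) else 0) := by
              have hset : MeasurableSet {ω | Yd t i ω = y ∧ Ad t i ω = a} :=
                ((hYd_meas t i) (measurableSet_singleton y)).inter
                  ((hAd_meas t i) (measurableSet_singleton a))
              exact Measurable.ite hset measurable_const measurable_const
            have hbdI1 : ∀ ω,
                |if Yd t i ω = y ∧ Ad t i ω = a then (1 : ℝ) else 0| ≤ 1 := by
              intro ω; split <;> simp
            have hmeasI2 : Measurable
                (fun ω => if Ad t i ω = a then (1 : ℝ) else 0) := by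
              have hset : MeasurableSet {ω | Ad t i ω = a} :=
                (hAd_meas t i) (measurableSet_singleton a)
              exact Measurable.ite hset measurable_const measurable_const
            have hbdI2 : ∀ ω, |if Ad t i ω = a then (1 : ℝ) else 0| ≤ 1 := by
              intro ω; split <;> simp
            have hAint : Integrable (fun ω => π t s (Xd t i ω) a / ehat a (Xd t i ω) *
                (if Yd t i ω = y ∧ Ad t i ω = a then (1 : ℝ) else 0)) P := by
              refine aux_integrable_of_bdd (C := 1 / ν * 1)
                ((hmeas1.comp (hXd_meas t i)).mul hmeasI1) fun ω => ?_
              rw [abs_mul]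
              exact mul_le_mul (hbd1 _) (hbdI1 ω) (abs_nonneg _)
                (div_nonneg zero_le_one hν.le)
            have hBint : Integrable (fun ω => π t s (Xd t i ω) a / ehat a (Xd t i ω) *
                μr y a (Xd t i ω) * (if Ad t i ω = a then (1 : ℝ) else 0)) P := by
              refine aux_integrable_of_bdd (C := 1 / ν * 1 * 1)
                ((hmeas2.comp (hXd_meas t i)).mul hmeasI2) fun ω => ?_
              rw [abs_mul]
              exact mul_le_mul (hbd2 _) (hbdI2 ω) (abs_nonneg _)
                (by positivity)
            have hCint : Integrable
                (fun ω => π t s (Xd t i ω) a * μr y a (Xd t i ω)) P := by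
              refine aux_integrable_of_bdd (C := 1 * 1)
                (((hπ_meas t s a).mul (hμ_meas y a)).comp (hXd_meas t i)) fun ω => ?_
              rw [abs_mul]
              exact mul_le_mul (hπ1 _ _ _ _) (hμ1 _ _ _) (abs_nonneg _) zero_le_one
            have hABint : Integrable (fun ω =>
                π t s (Xd t i ω) a / ehat a (Xd t i ω) *
                  (if Yd t i ω = y ∧ Ad t i ω = a then (1 : ℝ) else 0)
                - π t s (Xd t i ω) a / ehat a (Xd t i ω) * μr y a (Xd t i ω) *
                  (if Ad t i ω = a then (1 : ℝ) else 0)) P := hAint.sub hBint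
            rw [integral_add hABint hCint, integral_sub hAint hBint]
            have e1 := aux_tower P (Xd t i) (hXd_meas t i)
              (fun x => π t s x a / ehat a x) hmeas1 (1 / ν) hbd1
              (fun ω => if Yd t i ω = y ∧ Ad t i ω = a then (1 : ℝ) else 0)
              hmeasI1 1 hbdI1 (fun x => μr y a x * e a x) (hμe_cond t htT i y a)
            have e2 := aux_tower P (Xd t i) (hXd_meas t i)
              (fun x => π t s x a / ehat a x * μr y a x) hmeas2 (1 / ν * 1) hbd2
              (fun ω => if Ad t i ω = a then (1 : ℝ) else 0)
              hmeasI2 1 hbdI2 (e a) (he_cond t htT i a)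
            have e12 : ∫ ω, π t s (Xd t i ω) a / ehat a (Xd t i ω) *
                  (μr y a (Xd t i ω) * e a (Xd t i ω)) ∂P
                = ∫ ω, π t s (Xd t i ω) a / ehat a (Xd t i ω) * μr y a (Xd t i ω) *
                  e a (Xd t i ω) ∂P := by
              simp only [mul_assoc]
            rw [e1.trans (e12.trans e2.symm), sub_self, zero_add]
            rw [← hX_law t htT i]
            exact (integral_map (hXd_meas t i).aemeasurable
              ((hπ_meas t s a).mul (hμ_meas y a)).aestronglyMeasurable).symm
          -- value of ∫ g
          have hIg : ∫ ω, (R s a (trans s y) + Vhat (t + 1) (trans s y) ω) ∂P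
              = R s a (trans s y) + V (t + 1) (trans s y) := by
            rw [integral_add (integrable_const _) (hVint (trans s y)),
              integral_const, probReal_univ, one_smul,
              ihint (trans s y)]
          calc ∫ ω, π t s (Xd t i ω) a *
              (((if Yd t i ω = y then (1 : ℝ) else 0) - μhat y (Ad t i ω) (Xd t i ω))
                  / ehat (Ad t i ω) (Xd t i ω)
                  * (if Ad t i ω = a then (1 : ℝ) else 0)
                + μhat y a (Xd t i ω)) *
              (R s a (trans s y) + Vhat (t + 1) (trans s y) ω) ∂P
              = (∫ ω, π t s (Xd t i ω) a *
                (((if Yd t i ω = y then (1 : ℝ) else 0) - μhat y (Ad t i ω) (Xd t i ω))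
                    / ehat (Ad t i ω) (Xd t i ω)
                    * (if Ad t i ω = a then (1 : ℝ) else 0)
                  + μhat y a (Xd t i ω)) ∂P) *
                (∫ ω, (R s a (trans s y) + Vhat (t + 1) (trans s y) ω) ∂P) :=
              hIndep.integral_fun_mul_eq_mul_integral hfint.aestronglyMeasurable hgint.aestronglyMeasurable
            _ = (∫ x, π t s x a * μr y a x ∂F) *
                (R s a (trans s y) + V (t + 1) (trans s y)) := by rw [hIf, hIg]
        -- assemble
        simp only [hVhatrec t htT s]
        rw [integral_const_mul]
        rw [integral_finset_sum _ (fun i _ => integrable_finset_sum _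
          (fun a _ => integrable_finset_sum _ (fun y _ => htermint i a y)))]
        have hEi : ∀ i : Fin n, ∫ ω, (∑ a, ∑ y, π t s (Xd t i ω) a *
              (((if Yd t i ω = y then (1 : ℝ) else 0) - μhat y (Ad t i ω) (Xd t i ω))
                  / ehat (Ad t i ω) (Xd t i ω)
                  * (if Ad t i ω = a then (1 : ℝ) else 0)
                + μhat y a (Xd t i ω)) *
              (R s a (trans s y) + Vhat (t + 1) (trans s y) ω)) ∂P
            = ∑ a, ∑ y, (∫ x, π t s x a * μr y a x ∂F) *
              (R s a (trans s y) + V (t + 1) (trans s y)) := by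
          intro i
          rw [integral_finset_sum _ (fun a _ => integrable_finset_sum _
            (fun y _ => htermint i a y))]
          refine Finset.sum_congr rfl fun a _ => ?_
          rw [integral_finset_sum _ (fun y _ => htermint i a y)]
          exact Finset.sum_congr rfl fun y _ => hterm i a y
        rw [Finset.sum_congr rfl fun i _ => hEi i]
        rw [Finset.sum_const, Finset.card_univ, Fintype.card_fin, nsmul_eq_mul,
          ← mul_assoc, inv_mul_cancel₀ hn0, one_mul]
        have hFint : ∀ (a : 𝒜) (y : 𝒴), Integrable (fun x => π t s x a * μr y a x *
            (R s a (trans s y) + V (t + 1) (trans s y))) F := by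
          intro a y
          refine aux_integrable_of_bdd
            (C := 1 * 1 * |R s a (trans s y) + V (t + 1) (trans s y)|)
            (((hπ_meas t s a).mul (hμ_meas y a)).mul measurable_const) fun x => ?_
          rw [abs_mul, abs_mul]
          refine mul_le_mul (mul_le_mul (hπ1 _ _ _ _) (hμ1 _ _ _) (abs_nonneg _)
            zero_le_one) le_rfl (abs_nonneg _) (by norm_num)
        rw [hVrec t htT s]
        rw [integral_finset_sum _ (fun a _ => integrable_finset_sum _
          (fun y _ => hFint a y))]
        refine Finset.sum_congr rfl fun a _ => ?_
        rw [integral_finset_sum _ (fun y _ => hFint a y)]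
        exact Finset.sum_congr rfl fun y _ => (integral_mul_const _ _).symm
      exact ⟨hmeas_t, ⟨K, hK0, hbd_t⟩, hint_t⟩
  intro t ht s
  exact (key (T + 1 - t) t (by omega)).2.2 s
end

section
/- (Sequential doubly robust fitted value evaluation, propensity case.) If ê = e everywhere and e(a,x) ≥ ν > 0 for all a ∈ 𝒜 and x ∈ 𝒳, then the backward-recursive doubly robust value estimator is unbiased: E[ V̂_t(s) ] = V^π_t(s) for every t ∈ {0, …, T+1} and every s ∈ S, regardless of the choice of bounded measurable μ̂. -/
open MeasureTheory ProbabilityTheory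

lemma bdd_integrable' {α : Type*} [MeasurableSpace α] (μ : Measure α) [IsFiniteMeasure μ]
    {f : α → ℝ} (hf : Measurable f) {C : ℝ} (hC : ∀ x, |f x| ≤ C) : Integrable f μ :=
  (integrable_const C).mono' hf.aestronglyMeasurable
    (Filter.Eventually.of_forall fun x => by simpa [Real.norm_eq_abs] using hC x)

lemma key_integral' {Ω 𝒳 : Type*} [MeasurableSpace Ω] [mX : MeasurableSpace 𝒳]
    (P : Measure Ω) [IsProbabilityMeasure P] (F : Measure 𝒳)
    (X : Ω → 𝒳) (hX : Measurable X) (hlaw : Measure.map X P = F)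
    (g : 𝒳 → ℝ) (hg : Measurable g) (Cg : ℝ) (hgb : ∀ x, |g x| ≤ Cg)
    (Z : Ω → ℝ) (hZ : Measurable Z) (CZ : ℝ) (hZb : ∀ ω, |Z ω| ≤ CZ)
    (h : 𝒳 → ℝ) (hh : Measurable h)
    (hcond : P[Z | mX.comap X] =ᵐ[P] fun ω => h (X ω)) :
    ∫ ω, g (X ω) * Z ω ∂P = ∫ x, g x * h x ∂F := by
  have hm : mX.comap X ≤ _ := hX.comap_le
  haveI : SigmaFinite (P.trim hm) := by
    have : IsFiniteMeasure (P.trim hm) := isFiniteMeasure_trim hm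
    infer_instance
  have intZ : Integrable Z P := bdd_integrable' P hZ hZb
  have intgZ : Integrable (fun ω => g (X ω) * Z ω) P :=
    intZ.bdd_mul (hg.comp hX).aestronglyMeasurable
      (c := Cg) (Filter.Eventually.of_forall fun x => by simpa [Real.norm_eq_abs] using hgb (X x))
  have hgXsm : StronglyMeasurable[mX.comap X] fun ω => g (X ω) :=
    (hg.comp (measurable_iff_comap_le.2 le_rfl)).stronglyMeasurable
  calc ∫ ω, g (X ω) * Z ω ∂P
      = ∫ ω, (P[(fun ω => g (X ω)) * Z | mX.comap X]) ω ∂P := (integral_condExp hm).symm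
    _ = ∫ ω, ((fun ω => g (X ω)) * P[Z | mX.comap X]) ω ∂P :=
        integral_congr_ae (condExp_mul_of_stronglyMeasurable_left hgXsm intgZ intZ)
    _ = ∫ ω, g (X ω) * h (X ω) ∂P := by
        refine integral_congr_ae ?_
        filter_upwards [hcond] with ω hω
        simp [hω]
    _ = ∫ x, g x * h x ∂F := by
        rw [← hlaw, integral_map hX.aemeasurable (f := fun x => g x * h x) (hg.mul hh).aestronglyMeasurable]


/-- (Sequential doubly robust fitted value evaluation, propensity case.)
With i.i.d. batches of triples `(X_{t,i}, A_{t,i}, Y_{t,i})`, `X ~ F`, true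
nuisances `(e, μr)` characterized via conditional expectations, the true policy
value `V` and the backward-recursive doubly robust fitted value estimator
`Vhat` built from nuisance estimates `(μhat, ehat)`: if `ehat = e` everywhere
and `e(a,x) ≥ ν > 0` for all `a, x`, then `E[Vhat t s] = V t s` for every
`t ≤ T+1` and every state `s`, regardless of the bounded measurable `μhat`. -/
theorem sequential_dr_unbiased_propensity_case
    {Ω 𝒳 : Type*} [MeasurableSpace Ω] [mX : MeasurableSpace 𝒳]
    {S 𝒜 𝒴 : Type*} [Fintype S] [Nonempty S]
    [MeasurableSpace 𝒜] [Fintype 𝒜] [Nonempty 𝒜] [DecidableEq 𝒜]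
    [MeasurableSingletonClass 𝒜]
    [MeasurableSpace 𝒴] [Fintype 𝒴] [Nonempty 𝒴] [DecidableEq 𝒴]
    [MeasurableSingletonClass 𝒴]
    (P : Measure Ω) [IsProbabilityMeasure P]
    (F : Measure 𝒳) [IsProbabilityMeasure F]
    (trans : S → 𝒴 → S) (R : S → 𝒜 → S → ℝ) (T : ℕ) (n : ℕ) (hn : 0 < n)
    (e : 𝒜 → 𝒳 → ℝ) (μr : 𝒴 → 𝒜 → 𝒳 → ℝ)
    (he_meas : ∀ a, Measurable (e a)) (hμ_meas : ∀ y a, Measurable (μr y a))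
    (he_range : ∀ a x, e a x ∈ Set.Icc (0 : ℝ) 1)
    (hμ_range : ∀ y a x, μr y a x ∈ Set.Icc (0 : ℝ) 1)
    (hμ_sum : ∀ a x, ∑ y, μr y a x = 1)
    (π : ℕ → S → 𝒳 → 𝒜 → ℝ)
    (hπ_meas : ∀ t s a, Measurable fun x => π t s x a)
    (hπ_range : ∀ t s x a, π t s x a ∈ Set.Icc (0 : ℝ) 1)
    (hπ_sum : ∀ t s x, ∑ a, π t s x a = 1)
    (Xd : ℕ → Fin n → Ω → 𝒳) (Ad : ℕ → Fin n → Ω → 𝒜) (Yd : ℕ → Fin n → Ω → 𝒴)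
    (hXd_meas : ∀ t i, Measurable (Xd t i))
    (hAd_meas : ∀ t i, Measurable (Ad t i))
    (hYd_meas : ∀ t i, Measurable (Yd t i))
    (hX_law : ∀ t ≤ T, ∀ i, Measure.map (Xd t i) P = F)
    (hident : ∀ t ≤ T, ∀ i j,
      Measure.map (fun ω => (Xd t i ω, Ad t i ω, Yd t i ω)) P =
        Measure.map (fun ω => (Xd t j ω, Ad t j ω, Yd t j ω)) P)
    (hindep : iIndepFun
      (fun p : Fin (T + 1) × Fin n => fun ω =>
        (Xd p.1 p.2 ω, Ad p.1 p.2 ω, Yd p.1 p.2 ω)) P)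
    (he_cond : ∀ t ≤ T, ∀ i a,
      P[(fun ω => if Ad t i ω = a then (1 : ℝ) else 0) | mX.comap (Xd t i)]
        =ᵐ[P] fun ω => e a (Xd t i ω))
    (hμe_cond : ∀ t ≤ T, ∀ i y a,
      P[(fun ω => if Yd t i ω = y ∧ Ad t i ω = a then (1 : ℝ) else 0) |
          mX.comap (Xd t i)]
        =ᵐ[P] fun ω => μr y a (Xd t i ω) * e a (Xd t i ω))
    (μhat : 𝒴 → 𝒜 → 𝒳 → ℝ) (ehat : 𝒜 → 𝒳 → ℝ)
    (hμhat_meas : ∀ y a, Measurable (μhat y a))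
    (hμhat_bdd : ∃ C, ∀ y a x, |μhat y a x| ≤ C)
    (hehat_meas : ∀ a, Measurable (ehat a))
    (ν : ℝ) (hν : 0 < ν) (hehat_lb : ∀ a x, ν ≤ ehat a x)
    (V : ℕ → S → ℝ)
    (hVtop : ∀ s, V (T + 1) s = 0)
    (hVrec : ∀ t ≤ T, ∀ s, V t s =
      ∫ x, ∑ a, ∑ y, π t s x a * μr y a x *
        (R s a (trans s y) + V (t + 1) (trans s y)) ∂F)
    (Vhat : ℕ → S → Ω → ℝ)
    (hVhattop : ∀ s ω, Vhat (T + 1) s ω = 0)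
    (hVhatrec : ∀ t ≤ T, ∀ s ω, Vhat t s ω =
      (n : ℝ)⁻¹ * ∑ i : Fin n, ∑ a, ∑ y,
        π t s (Xd t i ω) a *
          (((if Yd t i ω = y then (1 : ℝ) else 0) - μhat y (Ad t i ω) (Xd t i ω))
              / ehat (Ad t i ω) (Xd t i ω)
              * (if Ad t i ω = a then (1 : ℝ) else 0)
            + μhat y a (Xd t i ω)) *
          (R s a (trans s y) + Vhat (t + 1) (trans s y) ω))
    (hcase : ∀ a x, ehat a x = e a x) (he_lb : ∀ a x, ν ≤ e a x) :
    ∀ t ≤ T + 1, ∀ s : S, (∫ ω, Vhat t s ω ∂P) = V t s := by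
    classical
    obtain ⟨C, hC⟩ := hμhat_bdd
    -- 𝒳 is nonempty since F is a probability measure
    have hX1 : Nonempty 𝒳 := by
      by_contra h
      have h0 : (Set.univ : Set 𝒳) = ∅ := Set.univ_eq_empty_iff.2 (not_nonempty_iff.1 h)
      have := measure_univ (μ := F)
      rw [h0, measure_empty] at this
      exact zero_ne_one this
    have hC0 : 0 ≤ C := le_trans (abs_nonneg _)
      (hC (Classical.arbitrary 𝒴) (Classical.arbitrary 𝒜) (Classical.arbitrary 𝒳))
    set K : ℝ := (1 + C) / ν + C with hKdef
    have hK0 : 0 ≤ K := by positivity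
    -- the joint data maps
    set data : Fin (T + 1) × Fin n → Ω → 𝒳 × 𝒜 × 𝒴 :=
      fun p ω => (Xd p.1 p.2 ω, Ad p.1 p.2 ω, Yd p.1 p.2 ω) with hdata_def
    have hdata_meas : ∀ p, Measurable (data p) := fun p =>
      (hXd_meas _ _).prodMk ((hAd_meas _ _).prodMk (hYd_meas _ _))
    set mGe : ℕ → MeasurableSpace Ω := fun t =>
      ⨆ (p : Fin (T + 1) × Fin n) (_ : t ≤ (p.1 : ℕ)),
        MeasurableSpace.comap (data p) inferInstance with hmGe_def
    have hmGe_le : ∀ t, mGe t ≤ ‹MeasurableSpace Ω› := fun t =>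
      iSup₂_le fun p _ => (hdata_meas p).comap_le
    -- measurability of components wrt mGe
    have hXmGe : ∀ (t u : ℕ), t ≤ u → u ≤ T → ∀ i : Fin n,
        Measurable[mGe t] (Xd u i) ∧ Measurable[mGe t] (Ad u i) ∧
          Measurable[mGe t] (Yd u i) := by
      intro t u htu huT i
      have hd : Measurable[mGe t] (data (⟨u, by omega⟩, i)) := by
        refine (measurable_iff_comap_le.2 le_rfl).mono ?_ le_rfl
        exact le_iSup₂ (f := fun p (_ : t ≤ (p.1 : ℕ)) =>
          MeasurableSpace.comap (data p) inferInstance) (⟨u, by omega⟩, i) htu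
      exact ⟨measurable_fst.comp hd, (measurable_fst.comp (measurable_snd.comp hd)),
        measurable_snd.comp (measurable_snd.comp hd)⟩
    -- composing a two-argument function with measurable 𝒜- and 𝒳-valued maps
    have hcompAX : ∀ {m' : MeasurableSpace Ω} {A' : Ω → 𝒜} {X' : Ω → 𝒳},
        Measurable[m'] A' → Measurable[m'] X' → ∀ (f : 𝒜 → 𝒳 → ℝ),
        (∀ a, Measurable (f a)) → Measurable[m'] fun ω => f (A' ω) (X' ω) := by
      intro m' A' X' hA hX f hf
      have heq : (fun ω => f (A' ω) (X' ω)) =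
          fun ω => ∑ a, if A' ω = a then f a (X' ω) else 0 := by
        funext ω
        rw [Finset.sum_ite_eq Finset.univ (A' ω) fun a => f a (X' ω)]
        simp
      rw [heq]
      exact Finset.measurable_sum _ fun a _ =>
        Measurable.ite (hA (measurableSet_singleton a)) ((hf a).comp hX) measurable_const
    -- measurability of the score term
    have hterm_meas : ∀ {m' : MeasurableSpace Ω} (u : ℕ) (i : Fin n),
        Measurable[m'] (Xd u i) → Measurable[m'] (Ad u i) → Measurable[m'] (Yd u i) →
        ∀ (s : S) (a : 𝒜) (y : 𝒴), Measurable[m'] fun ω =>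
          π u s (Xd u i ω) a *
            (((if Yd u i ω = y then (1 : ℝ) else 0) - μhat y (Ad u i ω) (Xd u i ω))
                / ehat (Ad u i ω) (Xd u i ω) * (if Ad u i ω = a then (1 : ℝ) else 0)
              + μhat y a (Xd u i ω)) := by
      intro m' u i hX' hA' hY' s a y
      refine ((hπ_meas u s a).comp hX').mul (Measurable.add (Measurable.mul (Measurable.div
        (Measurable.sub ?_ (hcompAX hA' hX' (fun a' x => μhat y a' x) fun a' => hμhat_meas y a'))
        (hcompAX hA' hX' ehat hehat_meas)) ?_) ((hμhat_meas y a).comp hX'))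
      · exact Measurable.ite (hY' (measurableSet_singleton y)) measurable_const measurable_const
      · exact Measurable.ite (hA' (measurableSet_singleton a)) measurable_const measurable_const
    -- bound on the score term
    have hterm_bound : ∀ (u : ℕ) (i : Fin n) (s : S) (a : 𝒜) (y : 𝒴) (ω : Ω),
        |π u s (Xd u i ω) a *
          (((if Yd u i ω = y then (1 : ℝ) else 0) - μhat y (Ad u i ω) (Xd u i ω))
              / ehat (Ad u i ω) (Xd u i ω) * (if Ad u i ω = a then (1 : ℝ) else 0)
            + μhat y a (Xd u i ω))| ≤ K := by
      intro u i s a y ω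
      have hπ1 : |π u s (Xd u i ω) a| ≤ 1 := by
        rcases hπ_range u s (Xd u i ω) a with ⟨h1, h2⟩
        rw [abs_le]; constructor <;> linarith
      have hepos : 0 < ehat (Ad u i ω) (Xd u i ω) := lt_of_lt_of_le hν (hehat_lb _ _)
      have hnum : |(if Yd u i ω = y then (1 : ℝ) else 0) - μhat y (Ad u i ω) (Xd u i ω)|
          ≤ 1 + C := by
        refine (abs_sub _ _).trans (add_le_add ?_ (hC _ _ _))
        split <;> simp
      have hdiv : |((if Yd u i ω = y then (1 : ℝ) else 0) - μhat y (Ad u i ω) (Xd u i ω))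
          / ehat (Ad u i ω) (Xd u i ω)| ≤ (1 + C) / ν := by
        rw [abs_div, abs_of_pos hepos]
        exact div_le_div₀ (by linarith) hnum hν (hehat_lb _ _)
      have hind : |if Ad u i ω = a then (1 : ℝ) else 0| ≤ 1 := by split <;> simp
      have hΓ : |((if Yd u i ω = y then (1 : ℝ) else 0) - μhat y (Ad u i ω) (Xd u i ω))
            / ehat (Ad u i ω) (Xd u i ω) * (if Ad u i ω = a then (1 : ℝ) else 0)
          + μhat y a (Xd u i ω)| ≤ K := by
        refine (abs_add_le _ _).trans ?_
        rw [abs_mul, hKdef]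
        have h1 : |((if Yd u i ω = y then (1 : ℝ) else 0) - μhat y (Ad u i ω) (Xd u i ω))
              / ehat (Ad u i ω) (Xd u i ω)| * |if Ad u i ω = a then (1 : ℝ) else 0|
            ≤ (1 + C) / ν * 1 := mul_le_mul hdiv hind (abs_nonneg _) (by positivity)
        have h2 := hC y a (Xd u i ω)
        linarith
      calc |π u s (Xd u i ω) a * _| = |π u s (Xd u i ω) a| * |_| := abs_mul _ _
        _ ≤ 1 * K := mul_le_mul hπ1 hΓ (abs_nonneg _) zero_le_one
        _ = K := one_mul K
        -- measurability of Vhat wrt the σ-algebra of batches ≥ t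
    have hVhat_meas : ∀ d u, u + d = T + 1 → ∀ t, t ≤ u → ∀ s,
        Measurable[mGe t] (Vhat u s) := by
      intro d
      induction d with
      | zero =>
        intro u hu t htu s
        have hu' : u = T + 1 := by omega
        subst hu'
        have h0 : Vhat (T + 1) s = fun _ => (0 : ℝ) := funext fun ω => hVhattop s ω
        rw [h0]; exact measurable_const
      | succ d ih =>
        intro u hu t htu s
        have huT : u ≤ T := by omega
        have h0 : Vhat u s = fun ω => (n : ℝ)⁻¹ * ∑ i : Fin n, ∑ a, ∑ y,
            π u s (Xd u i ω) a *
              (((if Yd u i ω = y then (1 : ℝ) else 0) - μhat y (Ad u i ω) (Xd u i ω))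
                  / ehat (Ad u i ω) (Xd u i ω) * (if Ad u i ω = a then (1 : ℝ) else 0)
                + μhat y a (Xd u i ω)) *
              (R s a (trans s y) + Vhat (u + 1) (trans s y) ω) :=
          funext fun ω => hVhatrec u huT s ω
        rw [h0]
        refine Measurable.const_mul ?_ _
        refine Finset.measurable_sum _ fun i _ => Finset.measurable_sum _ fun a _ =>
          Finset.measurable_sum _ fun y _ => ?_
        obtain ⟨hX', hA', hY'⟩ := hXmGe t u htu huT i
        exact (hterm_meas u i hX' hA' hY' s a y).mul
          (measurable_const.add (ih (u + 1) (by omega) t (by omega) (trans s y)))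
    have hVhat_meas0 : ∀ u, u ≤ T + 1 → ∀ s, Measurable (Vhat u s) := fun u hu s =>
      (hVhat_meas (T + 1 - u) u (by omega) 0 (Nat.zero_le _) s).mono (hmGe_le 0) le_rfl
    -- integrability of Vhat
    have hVhat_int : ∀ d u, u + d = T + 1 → ∀ s, Integrable (Vhat u s) P := by
      intro d
      induction d with
      | zero =>
        intro u hu s
        have hu' : u = T + 1 := by omega
        subst hu'
        have h0 : Vhat (T + 1) s = fun _ => (0 : ℝ) := funext fun ω => hVhattop s ω
        rw [h0]; exact integrable_const 0
      | succ d ih =>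
        intro u hu s
        have huT : u ≤ T := by omega
        have h0 : Vhat u s = fun ω => (n : ℝ)⁻¹ * ∑ i : Fin n, ∑ a, ∑ y,
            π u s (Xd u i ω) a *
              (((if Yd u i ω = y then (1 : ℝ) else 0) - μhat y (Ad u i ω) (Xd u i ω))
                  / ehat (Ad u i ω) (Xd u i ω) * (if Ad u i ω = a then (1 : ℝ) else 0)
                + μhat y a (Xd u i ω)) *
              (R s a (trans s y) + Vhat (u + 1) (trans s y) ω) :=
          funext fun ω => hVhatrec u huT s ω
        rw [h0]
        refine Integrable.const_mul ?_ _
        refine integrable_finset_sum _ fun i _ => integrable_finset_sum _ fun a _ =>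
          integrable_finset_sum _ fun y _ => ?_
        exact Integrable.bdd_mul ((integrable_const _).add (ih (u + 1) (by omega) (trans s y)))
          (hterm_meas u i (hXd_meas u i) (hAd_meas u i) (hYd_meas u i) s a y).aestronglyMeasurable
          (c := K) (Filter.Eventually.of_forall fun ω => by simpa only [Real.norm_eq_abs] using hterm_bound u i s a y ω)
    -- independence of batch t from batches ≥ t+1
    have hindep_sigma : ∀ (t : ℕ) (htT : t ≤ T) (i : Fin n),
        Indep (MeasurableSpace.comap (data (⟨t, by omega⟩, i)) inferInstance)
          (mGe (t + 1)) P := by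
      intro t htT i
      have h := indep_biSup_compl (fun p => (hdata_meas p).comap_le) hindep.iIndep
        {(⟨t, by omega⟩, i)}
      refine indep_of_indep_of_le_left (indep_of_indep_of_le_right h ?_) ?_
      · refine iSup₂_le fun p hp => ?_
        refine le_iSup₂ (f := fun p (_ : p ∈ ({((⟨t, by omega⟩ : Fin (T + 1)), i)} :
          Set (Fin (T + 1) × Fin n))ᶜ) => MeasurableSpace.comap (data p) inferInstance) p ?_
        intro hmem
        rw [Set.mem_singleton_iff] at hmem
        rw [hmem] at hp
        simp at hp
      · exact le_iSup₂ (f := fun p (_ : p ∈ ({((⟨t, by omega⟩ : Fin (T + 1)), i)} :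
          Set (Fin (T + 1) × Fin n))) => MeasurableSpace.comap (data p) inferInstance)
          _ (Set.mem_singleton _)
        -- main backward induction
    suffices H : ∀ d u, u + d = T + 1 → ∀ s : S, (∫ ω, Vhat u s ω ∂P) = V u s by
      intro t ht s
      exact H (T + 1 - t) t (by omega) s
    intro d
    induction d with
    | zero =>
      intro u hu s
      have hu' : u = T + 1 := by omega
      subst hu'
      simp only [hVhattop, hVtop, integral_zero]
    | succ d ih =>
      intro u hu s
      have huT : u ≤ T := by omega
      have hnne : (n : ℝ) ≠ 0 := Nat.cast_ne_zero.2 hn.ne'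
      -- expected value of the score
      have hscore : ∀ (i : Fin n) (a : 𝒜) (y : 𝒴),
          ∫ ω, π u s (Xd u i ω) a *
            (((if Yd u i ω = y then (1 : ℝ) else 0) - μhat y (Ad u i ω) (Xd u i ω))
                / ehat (Ad u i ω) (Xd u i ω) * (if Ad u i ω = a then (1 : ℝ) else 0)
              + μhat y a (Xd u i ω)) ∂P
            = ∫ x, π u s x a * μr y a x ∂F := by
        intro i a y
        have hene : ∀ x, e a x ≠ 0 := fun x => (lt_of_lt_of_le hν (he_lb a x)).ne'
        have hfeq : ∀ ω, π u s (Xd u i ω) a *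
            (((if Yd u i ω = y then (1 : ℝ) else 0) - μhat y (Ad u i ω) (Xd u i ω))
                / ehat (Ad u i ω) (Xd u i ω) * (if Ad u i ω = a then (1 : ℝ) else 0)
              + μhat y a (Xd u i ω))
            = (π u s (Xd u i ω) a / e a (Xd u i ω))
                * (if Yd u i ω = y ∧ Ad u i ω = a then (1 : ℝ) else 0)
              - (π u s (Xd u i ω) a * μhat y a (Xd u i ω) / e a (Xd u i ω))
                * (if Ad u i ω = a then (1 : ℝ) else 0)
              + π u s (Xd u i ω) a * μhat y a (Xd u i ω) := by
          intro ω
          by_cases hA : Ad u i ω = a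
          · by_cases hY : Yd u i ω = y
            · simp only [hcase, hA, hY, and_self, if_true]
              field_simp [hene (Xd u i ω)]
            · simp only [hcase, hA, hY, and_true, if_true, if_false, false_and,
                if_neg (show ¬(False ∧ True) by simp)]
              field_simp [hene (Xd u i ω)]
          · simp [hcase, hA]
        have hZ1meas : Measurable fun ω =>
            (if Yd u i ω = y ∧ Ad u i ω = a then (1 : ℝ) else 0) := by
          refine Measurable.ite ?_ measurable_const measurable_const
          exact ((hYd_meas u i) (measurableSet_singleton y)).inter
            ((hAd_meas u i) (measurableSet_singleton a))
        have hZ2meas : Measurable fun ω => (if Ad u i ω = a then (1 : ℝ) else 0) :=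
          Measurable.ite ((hAd_meas u i) (measurableSet_singleton a)) measurable_const
            measurable_const
        have hZ1b : ∀ ω, |(if Yd u i ω = y ∧ Ad u i ω = a then (1 : ℝ) else 0)| ≤ 1 := by
          intro ω; split <;> simp
        have hZ2b : ∀ ω, |(if Ad u i ω = a then (1 : ℝ) else 0)| ≤ 1 := by
          intro ω; split <;> simp
        have hg1 : Measurable fun x => π u s x a / e a x := (hπ_meas u s a).div (he_meas a)
        have hg2 : Measurable fun x => π u s x a * μhat y a x / e a x :=
          ((hπ_meas u s a).mul (hμhat_meas y a)).div (he_meas a)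
        have hg3 : Measurable fun x => π u s x a * μhat y a x :=
          (hπ_meas u s a).mul (hμhat_meas y a)
        have hπ1 : ∀ x, |π u s x a| ≤ 1 := fun x => by
          rcases hπ_range u s x a with ⟨h1, h2⟩
          rw [abs_le]; exact ⟨by linarith, h2⟩
        have hg1b : ∀ x, |π u s x a / e a x| ≤ 1 / ν := fun x => by
          rw [abs_div, abs_of_pos (lt_of_lt_of_le hν (he_lb a x))]
          exact div_le_div₀ zero_le_one (hπ1 x) hν (he_lb a x)
        have hg3b : ∀ x, |π u s x a * μhat y a x| ≤ C := fun x => by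
          rw [abs_mul]
          calc |π u s x a| * |μhat y a x| ≤ 1 * C :=
                mul_le_mul (hπ1 x) (hC y a x) (abs_nonneg _) zero_le_one
            _ = C := one_mul C
        have hg2b : ∀ x, |π u s x a * μhat y a x / e a x| ≤ C / ν := fun x => by
          rw [abs_div, abs_of_pos (lt_of_lt_of_le hν (he_lb a x))]
          exact div_le_div₀ hC0 (hg3b x) hν (he_lb a x)
        have I1 : ∫ ω, (π u s (Xd u i ω) a / e a (Xd u i ω))
              * (if Yd u i ω = y ∧ Ad u i ω = a then (1 : ℝ) else 0) ∂P
            = ∫ x, (π u s x a / e a x) * (μr y a x * e a x) ∂F :=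
          key_integral' P F (Xd u i) (hXd_meas u i) (hX_law u huT i) _ hg1 (1 / ν) hg1b
            _ hZ1meas 1 hZ1b _ ((hμ_meas y a).mul (he_meas a)) (hμe_cond u huT i y a)
        have I2 : ∫ ω, (π u s (Xd u i ω) a * μhat y a (Xd u i ω) / e a (Xd u i ω))
              * (if Ad u i ω = a then (1 : ℝ) else 0) ∂P
            = ∫ x, (π u s x a * μhat y a x / e a x) * e a x ∂F :=
          key_integral' P F (Xd u i) (hXd_meas u i) (hX_law u huT i) _ hg2 (C / ν) hg2b
            _ hZ2meas 1 hZ2b _ (he_meas a) (he_cond u huT i a)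
        have I3 : ∫ ω, π u s (Xd u i ω) a * μhat y a (Xd u i ω) ∂P
            = ∫ x, π u s x a * μhat y a x ∂F := by
          rw [← hX_law u huT i,
            integral_map (hXd_meas u i).aemeasurable hg3.aestronglyMeasurable]
        have int1 : Integrable (fun ω => (π u s (Xd u i ω) a / e a (Xd u i ω))
            * (if Yd u i ω = y ∧ Ad u i ω = a then (1 : ℝ) else 0)) P :=
          (bdd_integrable' P hZ1meas hZ1b).bdd_mul
            (hg1.comp (hXd_meas u i)).aestronglyMeasurable
            (c := 1 / ν) (Filter.Eventually.of_forall fun ω => by simpa only [Real.norm_eq_abs] using hg1b (Xd u i ω))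
        have int2 : Integrable (fun ω => (π u s (Xd u i ω) a * μhat y a (Xd u i ω)
              / e a (Xd u i ω)) * (if Ad u i ω = a then (1 : ℝ) else 0)) P :=
          (bdd_integrable' P hZ2meas hZ2b).bdd_mul
            (hg2.comp (hXd_meas u i)).aestronglyMeasurable
            (c := C / ν) (Filter.Eventually.of_forall fun ω => by simpa only [Real.norm_eq_abs] using hg2b (Xd u i ω))
        have int3 : Integrable (fun ω => π u s (Xd u i ω) a * μhat y a (Xd u i ω)) P :=
          bdd_integrable' P (hg3.comp (hXd_meas u i)) fun ω => hg3b (Xd u i ω)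
        have e1 : ∫ x, (π u s x a / e a x) * (μr y a x * e a x) ∂F
            = ∫ x, π u s x a * μr y a x ∂F :=
          integral_congr_ae (Filter.Eventually.of_forall fun x => by
            field_simp [hene x])
        have e2 : ∫ x, (π u s x a * μhat y a x / e a x) * e a x ∂F
            = ∫ x, π u s x a * μhat y a x ∂F :=
          integral_congr_ae (Filter.Eventually.of_forall fun x => by
            show π u s x a * μhat y a x / e a x * e a x = π u s x a * μhat y a x
            rw [div_mul_cancel₀ _ (hene x)])
        calc ∫ ω, π u s (Xd u i ω) a *
              (((if Yd u i ω = y then (1 : ℝ) else 0) - μhat y (Ad u i ω) (Xd u i ω))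
                  / ehat (Ad u i ω) (Xd u i ω) * (if Ad u i ω = a then (1 : ℝ) else 0)
                + μhat y a (Xd u i ω)) ∂P
            = ∫ ω, ((π u s (Xd u i ω) a / e a (Xd u i ω))
                  * (if Yd u i ω = y ∧ Ad u i ω = a then (1 : ℝ) else 0)
                - (π u s (Xd u i ω) a * μhat y a (Xd u i ω) / e a (Xd u i ω))
                  * (if Ad u i ω = a then (1 : ℝ) else 0)
                + π u s (Xd u i ω) a * μhat y a (Xd u i ω)) ∂P :=
              integral_congr_ae (Filter.Eventually.of_forall hfeq)
          _ = (∫ ω, (π u s (Xd u i ω) a / e a (Xd u i ω))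
                  * (if Yd u i ω = y ∧ Ad u i ω = a then (1 : ℝ) else 0) ∂P)
                - (∫ ω, (π u s (Xd u i ω) a * μhat y a (Xd u i ω) / e a (Xd u i ω))
                  * (if Ad u i ω = a then (1 : ℝ) else 0) ∂P)
                + ∫ ω, π u s (Xd u i ω) a * μhat y a (Xd u i ω) ∂P := by
              have h1 := integral_add (int1.sub int2) int3
              have h2 := integral_sub int1 int2
              simp only [Pi.sub_apply] at h1 h2
              rw [h1, h2]
          _ = ∫ x, π u s x a * μr y a x ∂F := by
              rw [I1, I2, I3, e1, e2]; ring
            -- value of the expected term, via independence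
      have hterm_val : ∀ (i : Fin n) (a : 𝒜) (y : 𝒴),
          ∫ ω, π u s (Xd u i ω) a *
              (((if Yd u i ω = y then (1 : ℝ) else 0) - μhat y (Ad u i ω) (Xd u i ω))
                  / ehat (Ad u i ω) (Xd u i ω) * (if Ad u i ω = a then (1 : ℝ) else 0)
                + μhat y a (Xd u i ω)) *
              (R s a (trans s y) + Vhat (u + 1) (trans s y) ω) ∂P
            = (∫ x, π u s x a * μr y a x ∂F)
              * (R s a (trans s y) + V (u + 1) (trans s y)) := by
        intro i a y
        have hdc : Measurable[MeasurableSpace.comap (data (⟨u, by omega⟩, i)) inferInstance]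
            (data (⟨u, by omega⟩, i)) := measurable_iff_comap_le.2 le_rfl
        have hfm : Measurable[MeasurableSpace.comap (data (⟨u, by omega⟩, i)) inferInstance]
            fun ω => π u s (Xd u i ω) a *
              (((if Yd u i ω = y then (1 : ℝ) else 0) - μhat y (Ad u i ω) (Xd u i ω))
                  / ehat (Ad u i ω) (Xd u i ω) * (if Ad u i ω = a then (1 : ℝ) else 0)
                + μhat y a (Xd u i ω)) :=
          hterm_meas u i (measurable_fst.comp hdc)
            (measurable_fst.comp (measurable_snd.comp hdc))
            (measurable_snd.comp (measurable_snd.comp hdc)) s a y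
        have hGm : Measurable[mGe (u + 1)]
            fun ω => R s a (trans s y) + Vhat (u + 1) (trans s y) ω :=
          measurable_const.add
            (hVhat_meas d (u + 1) (by omega) (u + 1) le_rfl (trans s y))
        have hIF : IndepFun
            (fun ω => π u s (Xd u i ω) a *
              (((if Yd u i ω = y then (1 : ℝ) else 0) - μhat y (Ad u i ω) (Xd u i ω))
                  / ehat (Ad u i ω) (Xd u i ω) * (if Ad u i ω = a then (1 : ℝ) else 0)
                + μhat y a (Xd u i ω)))
            (fun ω => R s a (trans s y) + Vhat (u + 1) (trans s y) ω) P :=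
          indep_of_indep_of_le_left
            (indep_of_indep_of_le_right (hindep_sigma u huT i)
              (measurable_iff_comap_le.1 hGm))
            (measurable_iff_comap_le.1 hfm)
        have hmul := IndepFun.integral_mul_eq_mul_integral hIF
          (hterm_meas u i (hXd_meas u i) (hAd_meas u i) (hYd_meas u i) s a y).aestronglyMeasurable
          ((hGm.mono (hmGe_le (u + 1)) le_rfl)).aestronglyMeasurable
        have hG_int : ∫ ω, (R s a (trans s y) + Vhat (u + 1) (trans s y) ω) ∂P
            = R s a (trans s y) + V (u + 1) (trans s y) := by
          rw [integral_add (integrable_const _) (hVhat_int d (u + 1) (by omega) (trans s y)),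
            integral_const, ih (u + 1) (by omega) (trans s y)]
          simp
        calc ∫ ω, π u s (Xd u i ω) a *
              (((if Yd u i ω = y then (1 : ℝ) else 0) - μhat y (Ad u i ω) (Xd u i ω))
                  / ehat (Ad u i ω) (Xd u i ω) * (if Ad u i ω = a then (1 : ℝ) else 0)
                + μhat y a (Xd u i ω)) *
              (R s a (trans s y) + Vhat (u + 1) (trans s y) ω) ∂P
            = (∫ ω, π u s (Xd u i ω) a *
                (((if Yd u i ω = y then (1 : ℝ) else 0) - μhat y (Ad u i ω) (Xd u i ω))
                    / ehat (Ad u i ω) (Xd u i ω) * (if Ad u i ω = a then (1 : ℝ) else 0)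
                  + μhat y a (Xd u i ω)) ∂P)
              * ∫ ω, (R s a (trans s y) + Vhat (u + 1) (trans s y) ω) ∂P := hmul
          _ = (∫ x, π u s x a * μr y a x ∂F)
              * (R s a (trans s y) + V (u + 1) (trans s y)) := by
            rw [hscore i a y, hG_int]
      -- integrability of each term
      have hterm_int : ∀ (i : Fin n) (a : 𝒜) (y : 𝒴), Integrable (fun ω =>
          π u s (Xd u i ω) a *
            (((if Yd u i ω = y then (1 : ℝ) else 0) - μhat y (Ad u i ω) (Xd u i ω))
                / ehat (Ad u i ω) (Xd u i ω) * (if Ad u i ω = a then (1 : ℝ) else 0)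
              + μhat y a (Xd u i ω)) *
            (R s a (trans s y) + Vhat (u + 1) (trans s y) ω)) P := fun i a y =>
        Integrable.bdd_mul
          ((integrable_const _).add (hVhat_int d (u + 1) (by omega) (trans s y)))
          (hterm_meas u i (hXd_meas u i) (hAd_meas u i) (hYd_meas u i) s a y).aestronglyMeasurable
          (c := K) (Filter.Eventually.of_forall fun ω => by simpa only [Real.norm_eq_abs] using hterm_bound u i s a y ω)
      have hFint : ∀ (a : 𝒜) (y : 𝒴), Integrable (fun x =>
          π u s x a * μr y a x * (R s a (trans s y) + V (u + 1) (trans s y))) F := by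
        intro a y
        refine bdd_integrable' F (((hπ_meas u s a).mul (hμ_meas y a)).mul measurable_const)
          (C := |R s a (trans s y) + V (u + 1) (trans s y)|) fun x => ?_
        rw [abs_mul]
        have h1 : |π u s x a * μr y a x| ≤ 1 := by
          rw [abs_mul]
          rcases hπ_range u s x a with ⟨hp1, hp2⟩
          rcases hμ_range y a x with ⟨hm1, hm2⟩
          have := mul_le_one₀ (abs_le.2 ⟨by linarith, hp2⟩) (abs_nonneg _)
            (abs_le.2 ⟨by linarith, hm2⟩)
          exact this
        nlinarith [abs_nonneg (R s a (trans s y) + V (u + 1) (trans s y))]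
      calc (∫ ω, Vhat u s ω ∂P)
          = ∫ ω, (n : ℝ)⁻¹ * ∑ i : Fin n, ∑ a, ∑ y,
              π u s (Xd u i ω) a *
                (((if Yd u i ω = y then (1 : ℝ) else 0) - μhat y (Ad u i ω) (Xd u i ω))
                    / ehat (Ad u i ω) (Xd u i ω) * (if Ad u i ω = a then (1 : ℝ) else 0)
                  + μhat y a (Xd u i ω)) *
                (R s a (trans s y) + Vhat (u + 1) (trans s y) ω) ∂P :=
            integral_congr_ae (Filter.Eventually.of_forall fun ω => hVhatrec u huT s ω)
        _ = (n : ℝ)⁻¹ * ∫ ω, ∑ i : Fin n, ∑ a, ∑ y,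
              π u s (Xd u i ω) a *
                (((if Yd u i ω = y then (1 : ℝ) else 0) - μhat y (Ad u i ω) (Xd u i ω))
                    / ehat (Ad u i ω) (Xd u i ω) * (if Ad u i ω = a then (1 : ℝ) else 0)
                  + μhat y a (Xd u i ω)) *
                (R s a (trans s y) + Vhat (u + 1) (trans s y) ω) ∂P :=
            integral_const_mul _ _
        _ = (n : ℝ)⁻¹ * ∑ i : Fin n, ∑ a, ∑ y, ∫ ω,
              π u s (Xd u i ω) a *
                (((if Yd u i ω = y then (1 : ℝ) else 0) - μhat y (Ad u i ω) (Xd u i ω))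
                    / ehat (Ad u i ω) (Xd u i ω) * (if Ad u i ω = a then (1 : ℝ) else 0)
                  + μhat y a (Xd u i ω)) *
                (R s a (trans s y) + Vhat (u + 1) (trans s y) ω) ∂P := by
            rw [integral_finset_sum _ fun i _ => integrable_finset_sum _ fun a _ =>
              integrable_finset_sum _ fun y _ => hterm_int i a y]
            congr 1
            refine Finset.sum_congr rfl fun i _ => ?_
            rw [integral_finset_sum _ fun a _ => integrable_finset_sum _ fun y _ =>
              hterm_int i a y]
            exact Finset.sum_congr rfl fun a _ =>
              integral_finset_sum _ fun y _ => hterm_int i a y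
        _ = (n : ℝ)⁻¹ * ∑ _i : Fin n, ∑ a, ∑ y, (∫ x, π u s x a * μr y a x ∂F)
              * (R s a (trans s y) + V (u + 1) (trans s y)) := by
            congr 1
            exact Finset.sum_congr rfl fun i _ => Finset.sum_congr rfl fun a _ =>
              Finset.sum_congr rfl fun y _ => hterm_val i a y
        _ = (n : ℝ)⁻¹ * ((n : ℝ) * ∑ a, ∑ y, (∫ x, π u s x a * μr y a x ∂F)
              * (R s a (trans s y) + V (u + 1) (trans s y))) := by
            rw [Finset.sum_const, Finset.card_univ, Fintype.card_fin, nsmul_eq_mul]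
        _ = ∑ a, ∑ y, (∫ x, π u s x a * μr y a x ∂F)
              * (R s a (trans s y) + V (u + 1) (trans s y)) := by
            rw [← mul_assoc, inv_mul_cancel₀ hnne, one_mul]
        _ = ∑ a, ∑ y, ∫ x, π u s x a * μr y a x
              * (R s a (trans s y) + V (u + 1) (trans s y)) ∂F :=
            Finset.sum_congr rfl fun a _ => Finset.sum_congr rfl fun y _ =>
              (integral_mul_const _ _).symm
        _ = ∫ x, ∑ a, ∑ y, π u s x a * μr y a x
              * (R s a (trans s y) + V (u + 1) (trans s y)) ∂F := by
            rw [integral_finset_sum _ fun a _ => integrable_finset_sum _ fun y _ => hFint a y]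
            exact Finset.sum_congr rfl fun a _ =>
              (integral_finset_sum _ fun y _ => hFint a y).symm
        _ = V u s := (hVrec u huT s).symm
end

section
/- (Lemma, discrete concavity of the optimal value function in dynamic pricing.) Assume R(0) ≥ 0 and R(1) ≥ 0. Define the optimal value function by backward recursion: V*_{T+1}(s) = 0 for all s ∈ ℕ, V*_t(0) = 0, and for integer s ≥ 1, V*_t(s) = sup over all single-timestep randomized policies π of ∫ Σ_{a∈{0,1}} π(a|x) [ μ(1|a,x)·(R(a) + V*_{t+1}(s−1)) + (1 − μ(1|a,x))·V*_{t+1}(s) ] dF(x). Then for every t ∈ {0, …, T+1} and every integer s ≥ 1: V*_t(s+1) + V*_t(s−1) ≤ 2·V*_t(s), i.e. the optimal value function is discretely concave in the inventory state. -/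
open MeasureTheory

section DCAux

variable {𝒳 : Type*} [MeasurableSpace 𝒳]

/-- the one-step integrand of the dynamic pricing recursion -/
def dcInt (μ1 : Fin 2 → 𝒳 → ℝ) (R : Fin 2 → ℝ) (π : 𝒳 → ℝ) (w0 w1 : ℝ) (x : 𝒳) : ℝ :=
  π x * (μ1 1 x * (R 1 + w0) + (1 - μ1 1 x) * w1) +
  (1 - π x) * (μ1 0 x * (R 0 + w0) + (1 - μ1 0 x) * w1)

/-- set of achievable one-step values -/
def dcSet (F : Measure 𝒳) (μ1 : Fin 2 → 𝒳 → ℝ) (R : Fin 2 → ℝ) (w0 w1 : ℝ) : Set ℝ :=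
  { v : ℝ | ∃ π : 𝒳 → ℝ, Measurable π ∧ (∀ x, 0 ≤ π x ∧ π x ≤ 1) ∧
      v = ∫ x, dcInt μ1 R π w0 w1 x ∂F }

lemma dcInt_repr (μ1 : Fin 2 → 𝒳 → ℝ) (R : Fin 2 → ℝ) (π : 𝒳 → ℝ) (w0 w1 : ℝ) (x : 𝒳) :
    dcInt μ1 R π w0 w1 x =
      (π x * μ1 1 x * R 1 + (1 - π x) * μ1 0 x * R 0)
      + (π x * μ1 1 x + (1 - π x) * μ1 0 x) * w0
      + (1 - (π x * μ1 1 x + (1 - π x) * μ1 0 x)) * w1 := by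
  simp only [dcInt]; ring

lemma q_bounds {p m0 m1 : ℝ} (hp0 : 0 ≤ p) (hp1 : p ≤ 1) (hm00 : 0 ≤ m0) (hm01 : m0 ≤ 1)
    (hm10 : 0 ≤ m1) (hm11 : m1 ≤ 1) :
    0 ≤ p * m1 + (1 - p) * m0 ∧ p * m1 + (1 - p) * m0 ≤ 1 := by
  constructor
  · nlinarith [mul_nonneg hp0 hm10, mul_nonneg (by linarith : (0:ℝ) ≤ 1 - p) hm00]
  · nlinarith [mul_le_mul_of_nonneg_left hm11 hp0,
      mul_le_mul_of_nonneg_left hm01 (by linarith : (0:ℝ) ≤ 1 - p)]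

lemma pair_core {rr rr' q q' w0 w1 w2 w3 : ℝ} (hq1 : q ≤ 1) (hq'0 : 0 ≤ q')
    (h1 : w3 + w1 ≤ 2 * w2) (h2 : w2 + w0 ≤ 2 * w1) :
    (rr + q * w2 + (1 - q) * w3) + (rr' + q' * w0 + (1 - q') * w1) ≤
      (rr + q * w1 + (1 - q) * w2) + (rr' + q' * w1 + (1 - q') * w2) := by
  nlinarith [mul_nonneg (by linarith : (0:ℝ) ≤ 1 - q)
      (by linarith : (0:ℝ) ≤ (w2 - w1) - (w3 - w2)),
    mul_nonneg hq'0 (by linarith : (0:ℝ) ≤ (w1 - w0) - (w2 - w1))]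

lemma dcInt_pair_le {μ1 : Fin 2 → 𝒳 → ℝ} (hμbound : ∀ a x, 0 ≤ μ1 a x ∧ μ1 a x ≤ 1)
    {R : Fin 2 → ℝ} {π π' : 𝒳 → ℝ}
    (hπ : ∀ x, 0 ≤ π x ∧ π x ≤ 1) (hπ' : ∀ x, 0 ≤ π' x ∧ π' x ≤ 1)
    {w0 w1 w2 w3 : ℝ} (h1 : w3 + w1 ≤ 2 * w2) (h2 : w2 + w0 ≤ 2 * w1) (x : 𝒳) :
    dcInt μ1 R π w2 w3 x + dcInt μ1 R π' w0 w1 x ≤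
      dcInt μ1 R π w1 w2 x + dcInt μ1 R π' w1 w2 x := by
  rw [dcInt_repr, dcInt_repr, dcInt_repr, dcInt_repr]
  have hq := q_bounds (hπ x).1 (hπ x).2 (hμbound 0 x).1 (hμbound 0 x).2
    (hμbound 1 x).1 (hμbound 1 x).2
  have hq' := q_bounds (hπ' x).1 (hπ' x).2 (hμbound 0 x).1 (hμbound 0 x).2
    (hμbound 1 x).1 (hμbound 1 x).2
  exact pair_core hq.2 hq'.1 h1 h2

lemma dcInt_s1_le {μ1 : Fin 2 → 𝒳 → ℝ} (hμbound : ∀ a x, 0 ≤ μ1 a x ∧ μ1 a x ≤ 1)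
    {R : Fin 2 → ℝ} {π : 𝒳 → ℝ} (hπ : ∀ x, 0 ≤ π x ∧ π x ≤ 1)
    {w1 w2 : ℝ} (h : w2 ≤ 2 * w1) (x : 𝒳) :
    dcInt μ1 R π w1 w2 x ≤ dcInt μ1 R π 0 w1 x + w1 := by
  rw [dcInt_repr, dcInt_repr]
  have hq := q_bounds (hπ x).1 (hπ x).2 (hμbound 0 x).1 (hμbound 0 x).2
    (hμbound 1 x).1 (hμbound 1 x).2
  nlinarith [mul_nonneg (by linarith [hq.2] : (0:ℝ) ≤ 1 - (π x * μ1 1 x + (1 - π x) * μ1 0 x))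
      (by linarith : (0:ℝ) ≤ 2 * w1 - w2)]

lemma dcInt_mono_w1 {μ1 : Fin 2 → 𝒳 → ℝ} (hμbound : ∀ a x, 0 ≤ μ1 a x ∧ μ1 a x ≤ 1)
    {R : Fin 2 → ℝ} {π : 𝒳 → ℝ} (hπ : ∀ x, 0 ≤ π x ∧ π x ≤ 1)
    {w0 w1 w1' : ℝ} (h : w1 ≤ w1') (x : 𝒳) :
    dcInt μ1 R π w0 w1 x ≤ dcInt μ1 R π w0 w1' x := by
  rw [dcInt_repr, dcInt_repr]
  have hq := q_bounds (hπ x).1 (hπ x).2 (hμbound 0 x).1 (hμbound 0 x).2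
    (hμbound 1 x).1 (hμbound 1 x).2
  nlinarith [mul_le_mul_of_nonneg_left h
      (by linarith [hq.2] : (0:ℝ) ≤ 1 - (π x * μ1 1 x + (1 - π x) * μ1 0 x))]

lemma dcInt_nonneg {μ1 : Fin 2 → 𝒳 → ℝ} (hμbound : ∀ a x, 0 ≤ μ1 a x ∧ μ1 a x ≤ 1)
    {R : Fin 2 → ℝ} (hR0 : 0 ≤ R 0) (hR1 : 0 ≤ R 1)
    {π : 𝒳 → ℝ} (hπ : ∀ x, 0 ≤ π x ∧ π x ≤ 1) (x : 𝒳) :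
    0 ≤ dcInt μ1 R π 0 0 x := by
  rw [dcInt_repr]
  have h1 : 0 ≤ π x * μ1 1 x * R 1 :=
    mul_nonneg (mul_nonneg (hπ x).1 (hμbound 1 x).1) hR1
  have h2 : 0 ≤ (1 - π x) * μ1 0 x * R 0 :=
    mul_nonneg (mul_nonneg (by linarith [(hπ x).2]) (hμbound 0 x).1) hR0
  nlinarith

lemma combo_abs_le {p A B C : ℝ} (hp0 : 0 ≤ p) (hp1 : p ≤ 1) (hA : |A| ≤ C) (hB : |B| ≤ C) :
    |p * A + (1 - p) * B| ≤ C := by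
  calc |p * A + (1 - p) * B| ≤ |p * A| + |(1 - p) * B| := abs_add_le _ _
    _ = p * |A| + (1 - p) * |B| := by
        rw [abs_mul, abs_mul, abs_of_nonneg hp0, abs_of_nonneg (by linarith : (0:ℝ) ≤ 1 - p)]
    _ ≤ p * C + (1 - p) * C := by
        exact add_le_add (mul_le_mul_of_nonneg_left hA hp0)
          (mul_le_mul_of_nonneg_left hB (by linarith))
    _ = C := by ring

lemma dcInt_abs_le {μ1 : Fin 2 → 𝒳 → ℝ} (hμbound : ∀ a x, 0 ≤ μ1 a x ∧ μ1 a x ≤ 1)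
    {R : Fin 2 → ℝ} {π : 𝒳 → ℝ} (hπ : ∀ x, 0 ≤ π x ∧ π x ≤ 1) (w0 w1 : ℝ) (x : 𝒳) :
    |dcInt μ1 R π w0 w1 x| ≤ |R 0| + |R 1| + |w0| + |w1| := by
  set C := |R 0| + |R 1| + |w0| + |w1| with hC
  have habs : ∀ a : Fin 2, |R a + w0| ≤ C ∧ |w1| ≤ C := by
    intro a
    have h0 : (0:ℝ) ≤ |R 0| := abs_nonneg _
    have h1 : (0:ℝ) ≤ |R 1| := abs_nonneg _
    have h2 : (0:ℝ) ≤ |w0| := abs_nonneg _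
    have h3 : (0:ℝ) ≤ |w1| := abs_nonneg _
    constructor
    · fin_cases a
      · calc |R 0 + w0| ≤ |R 0| + |w0| := abs_add_le _ _
          _ ≤ C := by rw [hC]; linarith
      · calc |R 1 + w0| ≤ |R 1| + |w0| := abs_add_le _ _
          _ ≤ C := by rw [hC]; linarith
    · rw [hC]; linarith
  have hA : |μ1 1 x * (R 1 + w0) + (1 - μ1 1 x) * w1| ≤ C :=
    combo_abs_le (hμbound 1 x).1 (hμbound 1 x).2 (habs 1).1 (habs 1).2
  have hB : |μ1 0 x * (R 0 + w0) + (1 - μ1 0 x) * w1| ≤ C :=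
    combo_abs_le (hμbound 0 x).1 (hμbound 0 x).2 (habs 0).1 (habs 0).2
  exact combo_abs_le (hπ x).1 (hπ x).2 hA hB

lemma dcInt_measurable {μ1 : Fin 2 → 𝒳 → ℝ} (hμmeas : ∀ a, Measurable (μ1 a))
    {R : Fin 2 → ℝ} {π : 𝒳 → ℝ} (hπ : Measurable π) (w0 w1 : ℝ) :
    Measurable (dcInt μ1 R π w0 w1) := by
  have h0 := hμmeas 0
  have h1 := hμmeas 1
  unfold dcInt
  fun_prop

lemma dcInt_integrable {F : Measure 𝒳} [IsProbabilityMeasure F]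
    {μ1 : Fin 2 → 𝒳 → ℝ} (hμmeas : ∀ a, Measurable (μ1 a))
    (hμbound : ∀ a x, 0 ≤ μ1 a x ∧ μ1 a x ≤ 1)
    {R : Fin 2 → ℝ} {π : 𝒳 → ℝ} (hπm : Measurable π) (hπ : ∀ x, 0 ≤ π x ∧ π x ≤ 1)
    (w0 w1 : ℝ) : Integrable (dcInt μ1 R π w0 w1) F := by
  refine ⟨(dcInt_measurable hμmeas hπm w0 w1).aestronglyMeasurable, ?_⟩
  apply MeasureTheory.HasFiniteIntegral.of_bounded (C := |R 0| + |R 1| + |w0| + |w1|)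
  filter_upwards with x
  simpa [Real.norm_eq_abs] using dcInt_abs_le hμbound hπ w0 w1 x

lemma dcSet_nonempty (F : Measure 𝒳) (μ1 : Fin 2 → 𝒳 → ℝ) (R : Fin 2 → ℝ) (w0 w1 : ℝ) :
    (dcSet F μ1 R w0 w1).Nonempty :=
  ⟨∫ x, dcInt μ1 R (fun _ => 0) w0 w1 x ∂F,
    (fun _ => 0), measurable_const, fun _ => ⟨le_refl 0, zero_le_one⟩, rfl⟩

lemma dcSet_bddAbove {F : Measure 𝒳} [IsProbabilityMeasure F]
    {μ1 : Fin 2 → 𝒳 → ℝ} (hμbound : ∀ a x, 0 ≤ μ1 a x ∧ μ1 a x ≤ 1)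
    (R : Fin 2 → ℝ) (w0 w1 : ℝ) : BddAbove (dcSet F μ1 R w0 w1) := by
  refine ⟨|R 0| + |R 1| + |w0| + |w1|, ?_⟩
  rintro v ⟨π, hπm, hπ, rfl⟩
  have h := norm_integral_le_of_norm_le_const (μ := F)
    (f := dcInt μ1 R π w0 w1) (C := |R 0| + |R 1| + |w0| + |w1|)
    (Filter.Eventually.of_forall fun x => by
      simpa [Real.norm_eq_abs] using dcInt_abs_le hμbound hπ w0 w1 x)
  simp only [measure_univ, probReal_univ, ENNReal.toReal_one, mul_one, Real.norm_eq_abs] at h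
  exact (le_abs_self _).trans h

/-- The one-step concavity propagation: if the continuation value `W` is
concave (with `W 0 = 0`), and `Vt` is defined by the one-step supremum
recursion over `W`, with `W 1 ≤ Vt 1`, then `Vt` is concave. -/
lemma dc_step {F : Measure 𝒳} [IsProbabilityMeasure F]
    {μ1 : Fin 2 → 𝒳 → ℝ} (hμmeas : ∀ a, Measurable (μ1 a))
    (hμbound : ∀ a x, 0 ≤ μ1 a x ∧ μ1 a x ≤ 1)
    {R : Fin 2 → ℝ}
    (W Vt : ℕ → ℝ)
    (hW0 : W 0 = 0)
    (hWconc : ∀ s : ℕ, 1 ≤ s → W (s + 1) + W (s - 1) ≤ 2 * W s)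
    (hVrec : ∀ s : ℕ, Vt (s + 1) = sSup (dcSet F μ1 R (W s) (W (s + 1))))
    (hVt0 : Vt 0 = 0)
    (hmono1 : W 1 ≤ Vt 1) :
    ∀ s : ℕ, 1 ≤ s → Vt (s + 1) + Vt (s - 1) ≤ 2 * Vt s := by
  intro s hs
  match s, hs with
  | 1, _ =>
    show Vt 2 + Vt 0 ≤ 2 * Vt 1
    have hW2 : W 2 ≤ 2 * W 1 := by
      have h := hWconc 1 le_rfl
      norm_num [hW0] at h
      linarith
    have hv2 : Vt 2 = sSup (dcSet F μ1 R (W 1) (W 2)) := by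
      have h := hVrec 1; norm_num at h; exact h
    have hv1 : Vt 1 = sSup (dcSet F μ1 R (W 0) (W 1)) := by
      have h := hVrec 0; norm_num at h; exact h
    have key : Vt 2 ≤ Vt 1 + W 1 := by
      rw [hv2]
      apply csSup_le (dcSet_nonempty F μ1 R (W 1) (W 2))
      rintro v ⟨π, hπm, hπ, rfl⟩
      have hint1 := dcInt_integrable (F := F) (R := R) hμmeas hμbound hπm hπ (W 1) (W 2)
      have hint2 := dcInt_integrable (F := F) (R := R) hμmeas hμbound hπm hπ 0 (W 1)
      have hle : (∫ x, dcInt μ1 R π (W 1) (W 2) x ∂F) ≤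
          (∫ x, (dcInt μ1 R π 0 (W 1) x + W 1) ∂F) := by
        apply integral_mono hint1 (hint2.add (integrable_const _))
        intro x
        exact dcInt_s1_le hμbound hπ hW2 x
      have heq : (∫ x, (dcInt μ1 R π 0 (W 1) x + W 1) ∂F) =
          (∫ x, dcInt μ1 R π 0 (W 1) x ∂F) + W 1 := by
        rw [integral_add hint2 (integrable_const _), integral_const]
        simp [measure_univ]
      have hmem : (∫ x, dcInt μ1 R π 0 (W 1) x ∂F) ∈ dcSet F μ1 R (W 0) (W 1) := by
        rw [hW0]; exact ⟨π, hπm, hπ, rfl⟩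
      have hle2 : (∫ x, dcInt μ1 R π 0 (W 1) x ∂F) ≤ Vt 1 := by
        rw [hv1]
        exact le_csSup (dcSet_bddAbove (F := F) hμbound R (W 0) (W 1)) hmem
      calc (∫ x, dcInt μ1 R π (W 1) (W 2) x ∂F) ≤ _ := hle
        _ = (∫ x, dcInt μ1 R π 0 (W 1) x ∂F) + W 1 := heq
        _ ≤ Vt 1 + W 1 := by linarith
    calc Vt 2 + Vt 0 = Vt 2 := by rw [hVt0]; ring
      _ ≤ Vt 1 + W 1 := key
      _ ≤ 2 * Vt 1 := by linarith
  | (k + 2), _ =>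
    show Vt (k + 3) + Vt (k + 1) ≤ 2 * Vt (k + 2)
    have h1 : W (k + 3) + W (k + 1) ≤ 2 * W (k + 2) := by
      have h := hWconc (k + 2) (by omega)
      have e1 : k + 2 + 1 = k + 3 := by omega
      have e2 : k + 2 - 1 = k + 1 := by omega
      rw [e1, e2] at h; exact h
    have h2 : W (k + 2) + W k ≤ 2 * W (k + 1) := by
      have h := hWconc (k + 1) (by omega)
      have e1 : k + 1 + 1 = k + 2 := by omega
      have e2 : k + 1 - 1 = k := by omega
      rw [e1, e2] at h; exact h
    have hbddC := dcSet_bddAbove (F := F) hμbound R (W (k + 1)) (W (k + 2))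
    have key : ∀ a ∈ dcSet F μ1 R (W (k + 2)) (W (k + 3)),
        ∀ b ∈ dcSet F μ1 R (W k) (W (k + 1)),
        a + b ≤ 2 * sSup (dcSet F μ1 R (W (k + 1)) (W (k + 2))) := by
      rintro a ⟨π, hπm, hπ, rfl⟩ b ⟨π', hπ'm, hπ', rfl⟩
      have hi1 := dcInt_integrable (F := F) (R := R) hμmeas hμbound hπm hπ (W (k + 2)) (W (k + 3))
      have hi2 := dcInt_integrable (F := F) (R := R) hμmeas hμbound hπ'm hπ' (W k) (W (k + 1))
      have hi3 := dcInt_integrable (F := F) (R := R) hμmeas hμbound hπm hπ (W (k + 1)) (W (k + 2))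
      have hi4 := dcInt_integrable (F := F) (R := R) hμmeas hμbound hπ'm hπ' (W (k + 1)) (W (k + 2))
      have hle : (∫ x, dcInt μ1 R π (W (k + 2)) (W (k + 3)) x ∂F) +
          (∫ x, dcInt μ1 R π' (W k) (W (k + 1)) x ∂F) ≤
          (∫ x, dcInt μ1 R π (W (k + 1)) (W (k + 2)) x ∂F) +
          (∫ x, dcInt μ1 R π' (W (k + 1)) (W (k + 2)) x ∂F) := by
        rw [← integral_add hi1 hi2, ← integral_add hi3 hi4]
        apply integral_mono (hi1.add hi2) (hi3.add hi4)
        intro x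
        exact dcInt_pair_le hμbound hπ hπ' h1 h2 x
      have hm3 : (∫ x, dcInt μ1 R π (W (k + 1)) (W (k + 2)) x ∂F) ≤
          sSup (dcSet F μ1 R (W (k + 1)) (W (k + 2))) :=
        le_csSup hbddC ⟨π, hπm, hπ, rfl⟩
      have hm4 : (∫ x, dcInt μ1 R π' (W (k + 1)) (W (k + 2)) x ∂F) ≤
          sSup (dcSet F μ1 R (W (k + 1)) (W (k + 2))) :=
        le_csSup hbddC ⟨π', hπ'm, hπ', rfl⟩
      linarith
    have hA := dcSet_nonempty F μ1 R (W (k + 2)) (W (k + 3))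
    have hB := dcSet_nonempty F μ1 R (W k) (W (k + 1))
    have goal' : sSup (dcSet F μ1 R (W (k + 2)) (W (k + 3))) +
        sSup (dcSet F μ1 R (W k) (W (k + 1))) ≤
        2 * sSup (dcSet F μ1 R (W (k + 1)) (W (k + 2))) := by
      have h : sSup (dcSet F μ1 R (W (k + 2)) (W (k + 3))) ≤
          2 * sSup (dcSet F μ1 R (W (k + 1)) (W (k + 2))) -
          sSup (dcSet F μ1 R (W k) (W (k + 1))) := by
        apply csSup_le hA
        intro a ha
        have h' : sSup (dcSet F μ1 R (W k) (W (k + 1))) ≤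
            2 * sSup (dcSet F μ1 R (W (k + 1)) (W (k + 2))) - a := by
          apply csSup_le hB
          intro b hb
          linarith [key a ha b hb]
        linarith
      linarith
    have e1 := hVrec (k + 2)
    have e2 := hVrec k
    have e3 := hVrec (k + 1)
    have n1 : k + 1 + 1 = k + 2 := by omega
    have n2 : k + 2 + 1 = k + 3 := by omega
    rw [n2] at e1
    rw [n1] at e3
    rw [e1, e3, e2]
    exact goal'

end DCAux

/-- (Lemma, discrete concavity of the optimal value function in dynamic
pricing.) With nonnegative revenues, the optimal value function `Vopt`, defined
by the backward recursion `Vopt (T+1) s = 0`, `Vopt t 0 = 0` and, for `s ≥ 1`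
and `t ≤ T`, as the supremum over all measurable single-timestep randomized
policies `π(1|·) : 𝒳 → [0,1]` of the one-step value, is discretely concave in
the inventory state: `Vopt t (s+1) + Vopt t (s−1) ≤ 2 Vopt t s`. -/
theorem discrete_concavity_of_optimal_value
    {𝒳 : Type*} [MeasurableSpace 𝒳] (F : Measure 𝒳) [IsProbabilityMeasure F]
    (μ1 : Fin 2 → 𝒳 → ℝ)
    (hμmeas : ∀ a, Measurable (μ1 a))
    (hμbound : ∀ a x, 0 ≤ μ1 a x ∧ μ1 a x ≤ 1)
    (R : Fin 2 → ℝ) (hR0 : 0 ≤ R 0) (hR1 : 0 ≤ R 1)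
    (T : ℕ)
    (Vopt : ℕ → ℕ → ℝ)
    (htop : ∀ s, Vopt (T + 1) s = 0)
    (hzero : ∀ t ≤ T + 1, Vopt t 0 = 0)
    (hrec : ∀ t ≤ T, ∀ s : ℕ, Vopt t (s + 1) =
      sSup { v : ℝ | ∃ π : 𝒳 → ℝ, Measurable π ∧ (∀ x, 0 ≤ π x ∧ π x ≤ 1) ∧
        v = ∫ x,
          (π x * (μ1 1 x * (R 1 + Vopt (t + 1) s) +
            (1 - μ1 1 x) * Vopt (t + 1) (s + 1)) +
          (1 - π x) * (μ1 0 x * (R 0 + Vopt (t + 1) s) +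
            (1 - μ1 0 x) * Vopt (t + 1) (s + 1))) ∂F }) :
    ∀ t ≤ T + 1, ∀ s : ℕ, 1 ≤ s →
      Vopt t (s + 1) + Vopt t (s - 1) ≤ 2 * Vopt t s := by
  -- restate the recursion via `dcSet`
  have hrec' : ∀ t ≤ T, ∀ s : ℕ, Vopt t (s + 1) =
      sSup (dcSet F μ1 R (Vopt (t + 1) s) (Vopt (t + 1) (s + 1))) := hrec
  -- monotonicity in time at inventory 1 : Vopt (t+1) 1 ≤ Vopt t 1
  have tmono : ∀ t ≤ T, Vopt (t + 1) 1 ≤ Vopt t 1 := by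
    have H : ∀ d : ℕ, ∀ t : ℕ, t + d = T → Vopt (t + 1) 1 ≤ Vopt t 1 := by
      intro d
      induction d with
      | zero =>
        intro t htT
        have ht : t = T := by omega
        have hv : Vopt t 1 = sSup (dcSet F μ1 R 0 0) := by
          have h := hrec' t (by omega) 0
          rw [ht] at h
          rw [hzero (T + 1) le_rfl, htop 1] at h
          rw [ht]
          norm_num at h
          exact h
        rw [ht, htop 1, ← ht, hv]
        have hmem : (∫ x, dcInt μ1 R (fun _ => 0) 0 0 x ∂F) ∈ dcSet F μ1 R 0 0 :=
          ⟨(fun _ => 0), measurable_const, fun _ => ⟨le_refl 0, zero_le_one⟩, rfl⟩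
        have h0 : (0:ℝ) ≤ ∫ x, dcInt μ1 R (fun _ => 0) 0 0 x ∂F :=
          integral_nonneg fun x =>
            dcInt_nonneg hμbound hR0 hR1 (fun _ => ⟨le_refl 0, zero_le_one⟩) x
        exact h0.trans (le_csSup (dcSet_bddAbove (F := F) hμbound R 0 0) hmem)
      | succ d ih =>
        intro t htT
        have hih := ih (t + 1) (by omega)
        have eL : Vopt (t + 1) 1 = sSup (dcSet F μ1 R 0 (Vopt (t + 2) 1)) := by
          have h := hrec' (t + 1) (by omega) 0
          have e12 : t + 1 + 1 = t + 2 := by omega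
          rw [e12, hzero (t + 2) (by omega)] at h
          norm_num at h
          exact h
        have eR : Vopt t 1 = sSup (dcSet F μ1 R 0 (Vopt (t + 1) 1)) := by
          have h := hrec' t (by omega) 0
          rw [hzero (t + 1) (by omega)] at h
          norm_num at h
          exact h
        rw [eL, eR]
        apply csSup_le (dcSet_nonempty F μ1 R 0 (Vopt (t + 2) 1))
        rintro v ⟨π, hπm, hπ, rfl⟩
        have hle : (∫ x, dcInt μ1 R π 0 (Vopt (t + 2) 1) x ∂F) ≤
            (∫ x, dcInt μ1 R π 0 (Vopt (t + 1) 1) x ∂F) := by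
          apply integral_mono (dcInt_integrable (F := F) (R := R) hμmeas hμbound hπm hπ _ _)
            (dcInt_integrable (F := F) (R := R) hμmeas hμbound hπm hπ _ _)
          intro x
          exact dcInt_mono_w1 hμbound hπ hih x
        exact hle.trans (le_csSup (dcSet_bddAbove (F := F) hμbound R 0 (Vopt (t + 1) 1))
          ⟨π, hπm, hπ, rfl⟩)
    intro t ht
    exact H (T - t) t (by omega)
  -- main downward induction on time
  have conc : ∀ d : ℕ, ∀ t : ℕ, t + d = T + 1 →
      ∀ s : ℕ, 1 ≤ s → Vopt t (s + 1) + Vopt t (s - 1) ≤ 2 * Vopt t s := by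
    intro d
    induction d with
    | zero =>
      intro t htT s hs
      have ht : t = T + 1 := by omega
      simp only [ht, htop]
      norm_num
    | succ d ih =>
      intro t htT s hs
      have htle : t ≤ T := by omega
      exact dc_step hμmeas hμbound (Vopt (t + 1)) (Vopt t)
        (hzero (t + 1) (by omega))
        (ih (t + 1) (by omega))
        (hrec' t htle)
        (hzero t (by omega))
        (tmono t htle)
        s hs
  intro t ht s hs
  exact conc (T + 1 - t) t (by omega) s hs
end
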